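/- arXiv:2309.16533 — 5 statements merged into one kernel-verified Lean document; each statement's English description precedes it below -/
import Mathlib

section
/- For every integer k ≥ 2, there exists a cograph G such that h(G) ≥ k and mh(G) ≥ (3/2)·h(G) − 1. -/
open SimpleGraph

namespace HuntersRabbit

universe u

variable {V : Type u}

/-- `shots S i` is the set `S_{i+1}` shot at (paper, 1-indexed) round `i+1`. -/
def shots (S : List (Finset V)) (i : ℕ) : Finset V := S.getD i ∅

/-- A hunter strategy is a finite sequence of nonempty subsets of vertices. -/
def ValidStrategy (S : List (Finset V)) : Prop := ∀ s ∈ S, s.Nonempty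

/-- The hunter strategy `S` uses at most `k` hunters. -/
def Uses (S : List (Finset V)) (k : ℕ) : Prop := ∀ s ∈ S, s.card ≤ k

/-- A rabbit trajectory of length `ℓ` starting from `W`: a walk `r 0, r 1, …, r ℓ`
with `r 0 ∈ W` (only the values at `0, …, ℓ` are relevant). -/
def Trajectory (G : SimpleGraph V) (W : Set V) (ℓ : ℕ) (r : ℕ → V) : Prop :=
  r 0 ∈ W ∧ ∀ i, i < ℓ → G.Adj (r i) (r (i + 1))

/-- The hunter strategy `S = (S_1, …, S_ℓ)` is winning with respect to `W`:
every rabbit trajectory `(r_0, …, r_ℓ)` starting from `W` satisfies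
`r_j ∈ S_{j+1}` for some `0 ≤ j < ℓ`. -/
def IsWinning (G : SimpleGraph V) (W : Set V) (S : List (Finset V)) : Prop :=
  ∀ r : ℕ → V, Trajectory G W S.length r → ∃ j, j < S.length ∧ r j ∈ shots S j

/-- The contaminated sets: `Zset G W S 0 = W` and
`Zset G W S (i+1) = {x | ∃ y ∈ Zset G W S i \ S_{i+1}, y ~ x}`. -/
def Zset (G : SimpleGraph V) (W : Set V) (S : List (Finset V)) : ℕ → Set V
  | 0 => W
  | i + 1 => {x | ∃ y ∈ Zset G W S i, y ∉ shots S i ∧ G.Adj y x}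

/-- `v` is cleared at (paper) round `i+1`: either `v ∈ S_{i+1}`, or
`N(v) ∩ Z_i` is nonempty and contained in `S_{i+1}`. -/
def ClearedAt (G : SimpleGraph V) (W : Set V) (S : List (Finset V)) (v : V) (i : ℕ) : Prop :=
  v ∈ shots S i ∨
    ((G.neighborSet v ∩ Zset G W S i).Nonempty ∧
      G.neighborSet v ∩ Zset G W S i ⊆ ↑(shots S i))

/-- The strategy is monotone: whenever `v` is cleared at some round and `v ∈ Z_j`
for some later (or equal) round `j`, then `v ∈ S_{j+1}`. -/
def IsMonotoneStrat (G : SimpleGraph V) (W : Set V) (S : List (Finset V)) : Prop :=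
  ∀ v : V, ∀ i j : ℕ, i < S.length → i < j → j < S.length →
    ClearedAt G W S v i → v ∈ Zset G W S j → v ∈ shots S j

/-- The hunter number `h_W(G)`: the minimum `k` such that some winning hunter
strategy with respect to `W` uses `k` hunters (with the convention that it is `0`
for a one-vertex graph). -/
noncomputable def hunterNumW (G : SimpleGraph V) (W : Set V) : ℕ :=
  if Nat.card V = 1 then 0
  else sInf {k | ∃ S : List (Finset V), ValidStrategy S ∧ IsWinning G W S ∧ Uses S k}

/-- The hunter number `h(G) = h_V(G)`. -/
noncomputable def hunterNum (G : SimpleGraph V) : ℕ := hunterNumW G Set.univ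

/-- The monotone hunter number `mh_W(G)`. -/
noncomputable def mhunterNumW (G : SimpleGraph V) (W : Set V) : ℕ :=
  if Nat.card V = 1 then 0
  else sInf {k | ∃ S : List (Finset V),
    ValidStrategy S ∧ IsWinning G W S ∧ IsMonotoneStrat G W S ∧ Uses S k}

/-- The monotone hunter number `mh(G) = mh_V(G)`. -/
noncomputable def mhunterNum (G : SimpleGraph V) : ℕ := mhunterNumW G Set.univ

/-- The disjoint union of two simple graphs. -/
def disjUnion {α β : Type u} (A : SimpleGraph α) (B : SimpleGraph β) :
    SimpleGraph (α ⊕ β) :=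
  SimpleGraph.fromRel (fun x y =>
    match x, y with
    | Sum.inl a, Sum.inl a' => A.Adj a a'
    | Sum.inr b, Sum.inr b' => B.Adj b b'
    | _, _ => False)

/-- The join of two simple graphs: their disjoint union together with all the
edges between the two vertex sets. -/
def joinGraph {α β : Type u} (A : SimpleGraph α) (B : SimpleGraph β) :
    SimpleGraph (α ⊕ β) :=
  SimpleGraph.fromRel (fun x y =>
    match x, y with
    | Sum.inl a, Sum.inl a' => A.Adj a a'
    | Sum.inr b, Sum.inr b' => B.Adj b b'
    | _, _ => True)

/-- Expressions building cographs: a single vertex, disjoint unions and joins. -/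
inductive CographExpr : Type
  | single : CographExpr
  | dunion : CographExpr → CographExpr → CographExpr
  | cjoin : CographExpr → CographExpr → CographExpr

/-- The vertex type of the cograph described by an expression. -/
def CographExpr.Vtx : CographExpr → Type
  | .single => Unit
  | .dunion a b => a.Vtx ⊕ b.Vtx
  | .cjoin a b => a.Vtx ⊕ b.Vtx

/-- The cograph described by an expression. -/
def CographExpr.graph : (c : CographExpr) → SimpleGraph c.Vtx
  | .single => ⊥
  | .dunion a b => disjUnion a.graph b.graph
  | .cjoin a b => joinGraph a.graph b.graph


section Machinery

lemma shots_mem {S : List (Finset V)} {i : ℕ} (h : i < S.length) : shots S i ∈ S := by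
  rw [shots, List.getD_eq_getElem?_getD, List.getElem?_eq_getElem h]
  exact List.getElem_mem h

lemma uses_shots_card {S : List (Finset V)} {k i : ℕ} (hS : Uses S k) (h : i < S.length) :
    (shots S i).card ≤ k := hS _ (shots_mem h)

lemma exists_traj {G : SimpleGraph V} {W : Set V} {S : List (Finset V)} :
    ∀ i (x : V), x ∈ Zset G W S i → ∃ r : ℕ → V, r i = x ∧ r 0 ∈ W ∧
      (∀ j < i, G.Adj (r j) (r (j+1))) ∧ (∀ j < i, r j ∉ shots S j) := by
  intro i
  induction i with
  | zero => intro x hx; exact ⟨fun _ => x, rfl, hx, by omega, by omega⟩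
  | succ i ih =>
    intro x hx
    obtain ⟨y, hy, hyS, hadj⟩ := hx
    obtain ⟨r, hri, hr0, hradj, hrS⟩ := ih y hy
    refine ⟨fun j => if j ≤ i then r j else x, by simp, by simpa using hr0, ?_, ?_⟩
    · intro j hj
      rcases Nat.lt_or_ge j i with hji | hji
      · simpa [hji.le, Nat.succ_le_of_lt hji] using hradj j hji
      · have hji' : j = i := by omega
        subst hji'
        simpa [hri] using hadj
    · intro j hj
      rcases Nat.lt_or_ge j i with hji | hji
      · simpa [hji.le] using hrS j hji
      · have hji' : j = i := by omega
        subst hji'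
        simpa [hri] using hyS

lemma winning_Zset_empty {G : SimpleGraph V} {S : List (Finset V)}
    (hw : IsWinning G Set.univ S) : Zset G Set.univ S S.length = ∅ := by
  by_contra h
  obtain ⟨x, hx⟩ := Set.nonempty_iff_ne_empty.2 h
  obtain ⟨r, _, hr0, hradj, hrS⟩ := exists_traj S.length x hx
  obtain ⟨j, hj, hjS⟩ := hw r ⟨hr0, hradj⟩
  exact hrS j hj hjS

lemma winning_of_Zset_empty {G : SimpleGraph V} {S : List (Finset V)}
    (h : Zset G Set.univ S S.length = ∅) : IsWinning G Set.univ S := by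
  intro r hr
  by_contra hc
  push_neg at hc
  have key : ∀ i ≤ S.length, r i ∈ Zset G Set.univ S i := by
    intro i
    induction i with
    | zero => intro _; exact Set.mem_univ _
    | succ i ih =>
      intro hi
      exact ⟨r i, ih (by omega), hc i (by omega), hr.2 i (by omega)⟩
  have := key S.length le_rfl
  rw [h] at this
  exact this

lemma exists_mem_not_mem {A S : Finset V} (h : S.card < A.card) : ∃ a ∈ A, a ∉ S := by
  by_contra hc
  push_neg at hc
  exact absurd (Finset.card_le_card hc) (by omega)

end Machinery

section Abstract

variable [Fintype V] [DecidableEq V]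

/-- The abstract structure of the graph `(E_{2m} ∪ K_m) ⋈ E_m`. -/
structure GapSetup (G : SimpleGraph V) (Xf Kf Wf : Finset V) (m : ℕ) : Prop where
  hm : 2 ≤ m
  cardX : Xf.card = 2 * m
  cardK : Kf.card = m
  cardW : Wf.card = m
  dXK : Disjoint Xf Kf
  dXW : Disjoint Xf Wf
  dKW : Disjoint Kf Wf
  cover : ∀ v : V, v ∈ Xf ∨ v ∈ Kf ∨ v ∈ Wf
  adjX : ∀ x ∈ Xf, ∀ v : V, G.Adj x v ↔ v ∈ Wf
  adjW : ∀ w ∈ Wf, ∀ v : V, G.Adj w v ↔ (v ∈ Xf ∨ v ∈ Kf)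
  adjK : ∀ k ∈ Kf, ∀ v : V, G.Adj k v ↔ (v ∈ Wf ∨ (v ∈ Kf ∧ v ≠ k))

namespace GapSetup

set_option linter.unusedSectionVars false

variable {G : SimpleGraph V} {Xf Kf Wf : Finset V} {m : ℕ}

lemma Xne (st : GapSetup G Xf Kf Wf m) : Xf.Nonempty := Finset.card_pos.mp (by have := st.hm; have := st.cardX; omega)

lemma Kne (st : GapSetup G Xf Kf Wf m) : Kf.Nonempty := Finset.card_pos.mp (by have := st.hm; have := st.cardK; omega)

lemma Wne (st : GapSetup G Xf Kf Wf m) : Wf.Nonempty := Finset.card_pos.mp (by have := st.hm; have := st.cardW; omega)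

lemma not_mem_of_mem_W (st : GapSetup G Xf Kf Wf m) {w : V} (hw : w ∈ Wf) :
    w ∉ Xf ∧ w ∉ Kf :=
  ⟨fun h => st.dXW.forall_ne_finset h hw rfl, fun h => st.dKW.forall_ne_finset h hw rfl⟩

lemma not_mem_of_mem_X (st : GapSetup G Xf Kf Wf m) {x : V} (hx : x ∈ Xf) :
    x ∉ Kf ∧ x ∉ Wf :=
  ⟨fun h => st.dXK.forall_ne_finset hx h rfl, fun h => st.dXW.forall_ne_finset hx h rfl⟩

lemma not_mem_of_mem_K (st : GapSetup G Xf Kf Wf m) {x : V} (hx : x ∈ Kf) :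
    x ∉ Xf ∧ x ∉ Wf :=
  ⟨fun h => st.dXK.forall_ne_finset h hx rfl, fun h => st.dKW.forall_ne_finset hx h rfl⟩

/-- If a `W`-vertex survives round `i+1`, everything in `X ∪ K` is contaminated next. -/
lemma stepXK (st : GapSetup G Xf Kf Wf m) {S : List (Finset V)} {Wst : Set V} {i : ℕ} {w : V}
    (hw : w ∈ Wf) (hwZ : w ∈ Zset G Wst S i) (hwS : w ∉ shots S i)
    {v : V} (hv : v ∈ Xf ∨ v ∈ Kf) : v ∈ Zset G Wst S (i+1) :=
  ⟨w, hwZ, hwS, (st.adjW w hw v).mpr hv⟩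

/-- If an `X`- or `K`-vertex survives round `i+1`, all of `W` is contaminated next. -/
lemma stepW (st : GapSetup G Xf Kf Wf m) {S : List (Finset V)} {Wst : Set V} {i : ℕ} {y : V}
    (hy : y ∈ Xf ∨ y ∈ Kf) (hyZ : y ∈ Zset G Wst S i) (hyS : y ∉ shots S i)
    {v : V} (hv : v ∈ Wf) : v ∈ Zset G Wst S (i+1) := by
  refine ⟨y, hyZ, hyS, ?_⟩
  rcases hy with hy | hy
  · exact (st.adjX y hy v).mpr hv
  · exact (st.adjK y hy v).mpr (Or.inl hv)

/-- If a `K`-vertex `k'` survives round `i+1`, every other `K`-vertex is contaminated next. -/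
lemma stepK (st : GapSetup G Xf Kf Wf m) {S : List (Finset V)} {Wst : Set V} {i : ℕ} {k' : V}
    (hk' : k' ∈ Kf) (hZ : k' ∈ Zset G Wst S i) (hS : k' ∉ shots S i)
    {v : V} (hv : v ∈ Kf) (hne : v ≠ k') : v ∈ Zset G Wst S (i+1) :=
  ⟨k', hZ, hS, (st.adjK k' hk' v).mpr (Or.inr ⟨hv, hne⟩)⟩

/-- An `X`-vertex can only be contaminated by a surviving `W`-vertex. -/
lemma X_contam (st : GapSetup G Xf Kf Wf m) {S : List (Finset V)} {Wst : Set V} {i : ℕ} {x : V}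
    (hx : x ∈ Xf) (hxZ : x ∈ Zset G Wst S (i+1)) :
    ∃ w ∈ Wf, w ∈ Zset G Wst S i ∧ w ∉ shots S i := by
  obtain ⟨y, hyZ, hyS, hadj⟩ := hxZ
  rcases st.cover y with hy | hy | hy
  · have := (st.adjX y hy x).mp hadj
    exact absurd this (st.not_mem_of_mem_X hx).2
  · rcases (st.adjK y hy x).mp hadj with h | h
    · exact absurd h (st.not_mem_of_mem_X hx).2
    · exact absurd h.1 (st.not_mem_of_mem_X hx).1
  · exact ⟨y, hy, hyZ, hyS⟩

/-- Any vertex other than `k'` in a finset with two distinct elements avoiding `Sf`. -/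
lemma pick_other {A Sf : Finset V} {a b : V} (ha : a ∈ A) (hb : b ∈ A)
    (haS : a ∉ Sf) (hbS : b ∉ Sf) (hab : a ≠ b) (v : V) :
    ∃ c ∈ A, c ∉ Sf ∧ c ≠ v := by
  by_cases h : a = v
  · exact ⟨b, hb, hbS, fun hbv => hab (h.trans hbv.symm) ⟩
  · exact ⟨a, ha, haS, h⟩

/-- If `W ⊆ Sf` and `|Sf| ≤ 2m-2` then at least two `K`-vertices avoid `Sf`. -/
lemma two_K_survivors (st : GapSetup G Xf Kf Wf m) {Sf : Finset V}
    (hW : Wf ⊆ Sf) (hc : Sf.card ≤ 2 * m - 2) :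
    ∃ a ∈ Kf, ∃ b ∈ Kf, a ∉ Sf ∧ b ∉ Sf ∧ a ≠ b := by
  have hsub : (Kf ∩ Sf) ∪ Wf ⊆ Sf := by
    intro v hv
    rcases Finset.mem_union.mp hv with hv | hv
    · exact (Finset.mem_inter.mp hv).2
    · exact hW hv
  have hdisj : Disjoint (Kf ∩ Sf) Wf := st.dKW.mono_left Finset.inter_subset_left
  have hcard : (Kf ∩ Sf).card + Wf.card ≤ Sf.card := by
    rw [← Finset.card_union_of_disjoint hdisj]
    exact Finset.card_le_card hsub
  have h2 : 1 < (Kf \ Sf).card := by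
    have := Finset.card_inter_add_card_sdiff Kf Sf
    have := st.cardK; have := st.cardW; have := st.hm
    omega
  obtain ⟨a, ha, b, hb, hab⟩ := Finset.one_lt_card.mp h2
  rw [Finset.mem_sdiff] at ha hb
  exact ⟨a, ha.1, b, hb.1, ha.2, hb.2, hab⟩

/-- The hunter number of the gap graph is at most `m`:
the strategy `[W, K, K, W]` wins. -/
lemma h_upper (st : GapSetup G Xf Kf Wf m) :
    ∃ S : List (Finset V), ValidStrategy S ∧ IsWinning G Set.univ S ∧ Uses S m := by
  classical
  refine ⟨[Wf, Kf, Kf, Wf], ?_, ?_, ?_⟩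
  · intro s hs
    simp only [List.mem_cons, List.not_mem_nil, or_false] at hs
    rcases hs with rfl | rfl | rfl | rfl
    exacts [st.Wne, st.Kne, st.Kne, st.Wne]
  · apply winning_of_Zset_empty
    have hs0 : shots [Wf, Kf, Kf, Wf] 0 = Wf := rfl
    have hs1 : shots [Wf, Kf, Kf, Wf] 1 = Kf := rfl
    have hs2 : shots [Wf, Kf, Kf, Wf] 2 = Kf := rfl
    have hs3 : shots [Wf, Kf, Kf, Wf] 3 = Wf := rfl
    set S : List (Finset V) := [Wf, Kf, Kf, Wf] with hSdef
    have hZ1 : Zset G Set.univ S 1 = (↑Wf : Set V) ∪ ↑Kf := by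
      ext v
      constructor
      · rintro ⟨y, -, hyS, hadj⟩
        rw [hs0] at hyS
        rcases st.cover y with hy | hy | hy
        · exact Or.inl ((st.adjX y hy v).mp hadj)
        · rcases (st.adjK y hy v).mp hadj with h | h
          exacts [Or.inl h, Or.inr h.1]
        · exact absurd hy hyS
      · intro hv
        rcases hv with hv | hv
        · obtain ⟨x₀, hx₀⟩ := st.Xne
          exact ⟨x₀, Set.mem_univ _, by rw [hs0]; exact (st.not_mem_of_mem_X hx₀).2,
            (st.adjX x₀ hx₀ v).mpr hv⟩
        · have h2 : 1 < Kf.card := by have := st.cardK; have := st.hm; omega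
          obtain ⟨a, ha, b, hb, hab⟩ := Finset.one_lt_card.mp h2
          obtain ⟨k', hk', -, hk'v⟩ := pick_other (Sf := ∅) ha hb (Finset.notMem_empty a)
            (Finset.notMem_empty b) hab v
          exact ⟨k', Set.mem_univ _, by rw [hs0]; exact (st.not_mem_of_mem_K hk').2,
            (st.adjK k' hk' v).mpr (Or.inr ⟨hv, hk'v.symm⟩)⟩
    have hZ2 : Zset G Set.univ S 2 = (↑Xf : Set V) ∪ ↑Kf := by
      ext v
      constructor
      · rintro ⟨y, hyZ, hyS, hadj⟩
        rw [hs1] at hyS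
        rw [hZ1] at hyZ
        have hyW : y ∈ Wf := by
          rcases hyZ with hy | hy
          · exact hy
          · exact absurd hy hyS
        exact (st.adjW y hyW v).mp hadj
      · intro hv
        obtain ⟨w₀, hw₀⟩ := st.Wne
        exact ⟨w₀, by rw [hZ1]; exact Or.inl hw₀, by rw [hs1]; exact (st.not_mem_of_mem_W hw₀).2,
          (st.adjW w₀ hw₀ v).mpr (by simpa using hv)⟩
    have hZ3 : Zset G Set.univ S 3 = (↑Wf : Set V) := by
      ext v
      constructor
      · rintro ⟨y, hyZ, hyS, hadj⟩
        rw [hs2] at hyS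
        rw [hZ2] at hyZ
        have hyX : y ∈ Xf := by
          rcases hyZ with hy | hy
          · exact hy
          · exact absurd hy hyS
        exact (st.adjX y hyX v).mp hadj
      · intro hv
        obtain ⟨x₀, hx₀⟩ := st.Xne
        exact ⟨x₀, by rw [hZ2]; exact Or.inl hx₀, by rw [hs2]; exact (st.not_mem_of_mem_X hx₀).1,
          (st.adjX x₀ hx₀ v).mpr hv⟩
    have hZ4 : Zset G Set.univ S 4 = ∅ := by
      ext v
      simp only [Set.mem_empty_iff_false, iff_false]
      rintro ⟨y, hyZ, hyS, -⟩
      rw [hs3] at hyS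
      rw [hZ3] at hyZ
      exact hyS hyZ
    show Zset G Set.univ S S.length = ∅
    exact hZ4
  · intro s hs
    simp only [List.mem_cons, List.not_mem_nil, or_false] at hs
    rcases hs with rfl | rfl | rfl | rfl
    exacts [le_of_eq st.cardW, le_of_eq st.cardK, le_of_eq st.cardK, le_of_eq st.cardW]

/-- Every winning strategy uses at least `m` hunters. -/
lemma h_lower (st : GapSetup G Xf Kf Wf m) {S : List (Finset V)} {k : ℕ}
    (hw : IsWinning G Set.univ S) (hu : Uses S k) : m ≤ k := by
  by_contra hc
  push_neg at hc
  have hZ := winning_Zset_empty hw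
  have inv : ∀ i ≤ S.length,
      ((↑Wf : Set V) ⊆ Zset G Set.univ S i) ∨ ((↑Xf : Set V) ∪ ↑Kf ⊆ Zset G Set.univ S i) := by
    intro i
    induction i with
    | zero => intro _; exact Or.inl (fun v _ => Set.mem_univ v)
    | succ i ih =>
      intro hi
      have hilen : i < S.length := by omega
      have hcard : (shots S i).card ≤ k := uses_shots_card hu hilen
      rcases ih (by omega) with hW | hXK
      · obtain ⟨w, hwW, hwS⟩ := exists_mem_not_mem (A := Wf) (S := shots S i)
          (by have := st.cardW; omega)
        exact Or.inr (fun v hv => st.stepXK hwW (hW hwW) hwS (by simpa using hv))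
      · have hcard3 : (shots S i).card < (Xf ∪ Kf).card := by
          have : (Xf ∪ Kf).card = 3 * m := by
            rw [Finset.card_union_of_disjoint st.dXK, st.cardX, st.cardK]; ring
          omega
        obtain ⟨y, hyXK, hyS⟩ := exists_mem_not_mem hcard3
        have hy' := Finset.mem_union.mp hyXK
        have hymem : y ∈ (↑Xf : Set V) ∪ ↑Kf := by simpa using hy'
        exact Or.inl (fun v hv => st.stepW hy' (hXK hymem) hyS hv)
  obtain ⟨w₀, hw₀⟩ := st.Wne
  obtain ⟨x₀, hx₀⟩ := st.Xne
  rcases inv S.length le_rfl with h | h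
  · exact absurd (h hw₀) (by rw [hZ]; exact Set.notMem_empty _)
  · exact absurd (h (Or.inl hx₀)) (by rw [hZ]; exact Set.notMem_empty _)

/-- Every monotone winning strategy uses at least `2m - 1` hunters. -/
lemma mh_lower (st : GapSetup G Xf Kf Wf m) {S : List (Finset V)} {k : ℕ}
    (hw : IsWinning G Set.univ S) (hmono : IsMonotoneStrat G Set.univ S)
    (hu : Uses S k) : 2 * m - 1 ≤ k := by
  classical
  by_contra hc
  push_neg at hc
  have hk : k ≤ 2 * m - 2 := by have := st.hm; omega
  have hZ := winning_Zset_empty hw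
  set ℓ := S.length with hℓ
  set Z : ℕ → Set V := Zset G Set.univ S with hZdef
  obtain ⟨x₀, hx₀⟩ := st.Xne
  obtain ⟨w₀, hw₀⟩ := st.Wne
  -- the last moment where X ∪ W is fully contaminated
  set P : ℕ → Prop := fun j => (↑Xf : Set V) ∪ ↑Wf ⊆ Z j with hPdef
  have hP0 : P 0 := fun v _ => Set.mem_univ v
  obtain ⟨u, hPu, huℓ, hmax⟩ : ∃ u, P u ∧ u ≤ ℓ ∧ ∀ j, u < j → j ≤ ℓ → ¬ P j :=
    ⟨Nat.findGreatest P ℓ, Nat.findGreatest_spec (Nat.zero_le ℓ) hP0,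
      Nat.findGreatest_le ℓ, fun j h1 h2 => Nat.findGreatest_is_greatest h1 h2⟩
  have huW : (↑Wf : Set V) ⊆ Z u := fun v hv => hPu (Or.inr hv)
  have huX : (↑Xf : Set V) ⊆ Z u := fun v hv => hPu (Or.inl hv)
  have hult : u < ℓ := by
    rcases Nat.lt_or_ge u ℓ with h | h
    · exact h
    · exfalso
      have hueq : u = ℓ := le_antisymm huℓ h
      have hxz := huX hx₀
      rw [hueq, hZ] at hxz
      exact hxz
  have hcard_u : (shots S u).card ≤ k := uses_shots_card hu hult
  -- Step 1 : all of W is shot at round u+1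
  have step1 : ∀ w ∈ Wf, w ∈ shots S u := by
    by_contra hcon
    push_neg at hcon
    obtain ⟨w, hwW, hwS⟩ := hcon
    have hXnext : (↑Xf : Set V) ⊆ Z (u+1) :=
      fun v hv => st.stepXK hwW (huW hwW) hwS (Or.inl hv)
    obtain ⟨x, hxX, hxS⟩ := exists_mem_not_mem (A := Xf) (S := shots S u)
      (by have := st.cardX; have := st.hm; omega)
    have hWnext : (↑Wf : Set V) ⊆ Z (u+1) :=
      fun v hv => st.stepW (Or.inl hxX) (huX hxX) hxS hv
    exact hmax (u+1) (by omega) (by omega) (fun v hv => hv.elim (fun h => hXnext h) (fun h => hWnext h))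
  -- Step 2 : all of K is contaminated at time u
  have step2 : (↑Kf : Set V) ⊆ Z u := by
    rcases Nat.eq_zero_or_pos u with h0 | hpos
    · rw [h0]; exact fun v _ => Set.mem_univ v
    · obtain ⟨i, rfl⟩ : ∃ i, u = i + 1 := ⟨u - 1, by omega⟩
      obtain ⟨w, hwW, hwZ, hwS⟩ := st.X_contam hx₀ (huX hx₀)
      exact fun v hv => st.stepXK hwW hwZ hwS (Or.inr (by simpa using hv))
  -- Step 3 : every X-vertex is cleared at round u+1
  have step3 : ∀ x ∈ Xf, ClearedAt G Set.univ S x u := by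
    intro x hx
    refine Or.inr ⟨⟨w₀, ?_, huW hw₀⟩, ?_⟩
    · exact (st.adjX x hx w₀).mpr hw₀
    · rintro v ⟨hvN, hvZ⟩
      have hvW : v ∈ Wf := (st.adjX x hx v).mp hvN
      exact step1 v hvW
  -- Step 4 : from time u+1 on, W ∪ K stays fully contaminated
  have step4 : ∀ d, u + 1 + d ≤ ℓ →
      ((↑Wf : Set V) ⊆ Z (u + 1 + d) ∧ (↑Kf : Set V) ⊆ Z (u + 1 + d)) := by
    intro d
    induction d with
    | zero =>
      intro _
      obtain ⟨a, ha, b, hb, haS, hbS, hab⟩ := two_K_survivors st (fun v hv => step1 v hv)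
        (le_trans hcard_u hk)
      constructor
      · exact fun v hv => st.stepW (Or.inr ha) (step2 ha) haS hv
      · intro v hv
        obtain ⟨c, hcK, hcS, hcv⟩ := pick_other ha hb haS hbS hab v
        exact st.stepK hcK (step2 hcK) hcS (by simpa using hv) hcv.symm
    | succ d ih =>
      intro hd
      set j := u + 1 + d with hjdef
      have hjℓ : j + 1 ≤ ℓ := by omega
      have hjlt : j < ℓ := by omega
      obtain ⟨ihW, ihK⟩ := ih (by omega)
      have hcard_j : (shots S j).card ≤ k := uses_shots_card hu hjlt
      -- all of W must be shot at round j+1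
      have hWshot : ∀ w ∈ Wf, w ∈ shots S j := by
        by_contra hcon
        push_neg at hcon
        obtain ⟨w, hwW, hwS⟩ := hcon
        have hXnext : (↑Xf : Set V) ⊆ Z (j+1) :=
          fun v hv => st.stepXK hwW (ihW hwW) hwS (Or.inl hv)
        rcases Nat.lt_or_ge (j+1) ℓ with hlt | hge
        · -- monotonicity forces all of X to be shot : too expensive
          have hXS : ∀ x ∈ Xf, x ∈ shots S (j+1) := by
            intro x hx
            exact hmono x u (j+1) hult (by omega) hlt (step3 x hx) (hXnext hx)
          have : Xf.card ≤ (shots S (j+1)).card :=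
            Finset.card_le_card (fun x hx => hXS x hx)
          have := uses_shots_card hu hlt
          have := st.cardX
          omega
        · have hj1 : j + 1 = ℓ := by omega
          have := hXnext hx₀
          rw [hj1, hZ] at this
          exact this
      obtain ⟨a, ha, b, hb, haS, hbS, hab⟩ := two_K_survivors st (fun v hv => hWshot v hv)
        (le_trans hcard_j hk)
      have goal : (↑Wf : Set V) ⊆ Z (j+1) ∧ (↑Kf : Set V) ⊆ Z (j+1) := by
        constructor
        · exact fun v hv => st.stepW (Or.inr ha) (ihK ha) haS hv
        · intro v hv
          obtain ⟨c, hcK, hcS, hcv⟩ := pick_other ha hb haS hbS hab v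
          exact st.stepK hcK (ihK hcK) hcS (by simpa using hv) hcv.symm
      have heq : u + 1 + (d + 1) = j + 1 := by omega
      rw [heq]
      exact goal
  have final := (step4 (ℓ - (u+1)) (by omega)).1
  have : u + 1 + (ℓ - (u+1)) = ℓ := by omega
  rw [this, hZ] at final
  exact absurd (final hw₀) (Set.notMem_empty _)

/-- The trivial monotone strategy : shoot everything once. -/
lemma mh_nonempty (G : SimpleGraph V) [Nonempty V] :
    ∃ S : List (Finset V), ValidStrategy S ∧ IsWinning G Set.univ S ∧
      IsMonotoneStrat G Set.univ S ∧ Uses S (Fintype.card V) := by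
  refine ⟨[Finset.univ], ?_, ?_, ?_, ?_⟩
  · intro s hs
    simp only [List.mem_cons, List.not_mem_nil, or_false] at hs
    subst hs
    exact Finset.univ_nonempty
  · intro r hr
    exact ⟨0, by simp, by simp [shots]⟩
  · intro v i j h1 h2 h3
    simp only [List.length_cons, List.length_nil] at h1 h3
    omega
  · intro s hs
    simp only [List.mem_cons, List.not_mem_nil, or_false] at hs
    subst hs
    simp

end GapSetup

end Abstract

section MainAbstract

variable [Fintype V] [DecidableEq V]

/-- Main abstract result : any graph admitting a `GapSetup` witnesses the gap. -/
lemma gap_main {G : SimpleGraph V} {Xf Kf Wf : Finset V} {m : ℕ}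
    (st : GapSetup G Xf Kf Wf m) :
    m ≤ hunterNum G ∧ 3 * hunterNum G ≤ 2 * mhunterNum G + 2 := by
  classical
  obtain ⟨x₀, hx₀⟩ := st.Xne
  haveI : Nonempty V := ⟨x₀⟩
  have hcardV : Nat.card V ≠ 1 := by
    obtain ⟨a, ha, b, hb, hab⟩ := Finset.one_lt_card.mp
      (show 1 < Xf.card by have := st.cardX; have := st.hm; omega)
    have h2 : 1 < Fintype.card V := Fintype.one_lt_card_iff.mpr ⟨a, b, hab⟩
    rw [Nat.card_eq_fintype_card]
    omega
  have hh : hunterNum G =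
      sInf {k | ∃ S : List (Finset V), ValidStrategy S ∧ IsWinning G Set.univ S ∧ Uses S k} := by
    rw [hunterNum, hunterNumW, if_neg hcardV]
  have hmh : mhunterNum G =
      sInf {k | ∃ S : List (Finset V), ValidStrategy S ∧ IsWinning G Set.univ S ∧
        IsMonotoneStrat G Set.univ S ∧ Uses S k} := by
    rw [mhunterNum, mhunterNumW, if_neg hcardV]
  have hA := st.h_upper
  have h_le : hunterNum G ≤ m := by
    rw [hh]; exact Nat.sInf_le hA
  have h_ge : m ≤ hunterNum G := by
    rw [hh]
    refine le_csInf ⟨m, hA⟩ ?_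
    rintro b ⟨S, -, hw, hu⟩
    exact st.h_lower hw hu
  have mh_ge : 2 * m - 1 ≤ mhunterNum G := by
    rw [hmh]
    refine le_csInf ⟨Fintype.card V, GapSetup.mh_nonempty G⟩ ?_
    rintro b ⟨S, -, hw, hm', hu⟩
    exact st.mh_lower hw hm' hu
  have := st.hm
  exact ⟨h_ge, by omega⟩

end MainAbstract

section Construction

/-- The expression for the empty graph on `n+1` vertices. -/
def eexpr : ℕ → CographExpr
  | 0 => .single
  | n + 1 => .dunion .single (eexpr n)

/-- The expression for the complete graph on `n+1` vertices. -/
def kexpr : ℕ → CographExpr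
  | 0 => .single
  | n + 1 => .cjoin .single (kexpr n)

/-- Vertex types of cograph expressions are finite. -/
lemma finiteVtx : ∀ c : CographExpr, Finite c.Vtx
  | .single => inferInstanceAs (Finite Unit)
  | .dunion a b =>
      haveI := finiteVtx a; haveI := finiteVtx b
      inferInstanceAs (Finite (a.Vtx ⊕ b.Vtx))
  | .cjoin a b =>
      haveI := finiteVtx a; haveI := finiteVtx b
      inferInstanceAs (Finite (a.Vtx ⊕ b.Vtx))

lemma card_vtx_single : Nat.card CographExpr.single.Vtx = 1 := by
  haveI : Unique CographExpr.single.Vtx := inferInstanceAs (Unique Unit)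
  exact Nat.card_unique

lemma card_vtx_eexpr : ∀ n : ℕ, Nat.card (eexpr n).Vtx = n + 1
  | 0 => card_vtx_single
  | n + 1 => by
      haveI := finiteVtx (eexpr n)
      haveI : Finite CographExpr.single.Vtx := inferInstanceAs (Finite Unit)
      have h : Nat.card (CographExpr.single.Vtx ⊕ (eexpr n).Vtx) =
          Nat.card CographExpr.single.Vtx + Nat.card (eexpr n).Vtx := Nat.card_sum
      have h2 : Nat.card (eexpr (n+1)).Vtx =
          Nat.card CographExpr.single.Vtx + Nat.card (eexpr n).Vtx := h
      rw [h2, card_vtx_eexpr n, card_vtx_single]; omega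

lemma card_vtx_kexpr : ∀ n : ℕ, Nat.card (kexpr n).Vtx = n + 1
  | 0 => card_vtx_single
  | n + 1 => by
      haveI := finiteVtx (kexpr n)
      haveI : Finite CographExpr.single.Vtx := inferInstanceAs (Finite Unit)
      have h : Nat.card (CographExpr.single.Vtx ⊕ (kexpr n).Vtx) =
          Nat.card CographExpr.single.Vtx + Nat.card (kexpr n).Vtx := Nat.card_sum
      have h2 : Nat.card (kexpr (n+1)).Vtx =
          Nat.card CographExpr.single.Vtx + Nat.card (kexpr n).Vtx := h
      rw [h2, card_vtx_kexpr n, card_vtx_single]; omega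

lemma joinGraph_adj_inl_inr {α β : Type u} (A : SimpleGraph α) (B : SimpleGraph β)
    (a : α) (b : β) : (joinGraph A B).Adj (Sum.inl a) (Sum.inr b) := by
  rw [joinGraph, SimpleGraph.fromRel_adj]
  exact ⟨by simp, Or.inl trivial⟩

lemma joinGraph_adj_inr_inl {α β : Type u} (A : SimpleGraph α) (B : SimpleGraph β)
    (a : α) (b : β) : (joinGraph A B).Adj (Sum.inr b) (Sum.inl a) := by
  rw [joinGraph, SimpleGraph.fromRel_adj]
  exact ⟨by simp, Or.inl trivial⟩

lemma joinGraph_adj_inl_inl {α β : Type u} (A : SimpleGraph α) (B : SimpleGraph β)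
    (a a' : α) : (joinGraph A B).Adj (Sum.inl a) (Sum.inl a') ↔ A.Adj a a' := by
  rw [joinGraph, SimpleGraph.fromRel_adj]
  constructor
  · rintro ⟨hne, h | h⟩
    · exact h
    · exact h.symm
  · intro h
    exact ⟨by simpa using h.ne, Or.inl h⟩

lemma joinGraph_adj_inr_inr {α β : Type u} (A : SimpleGraph α) (B : SimpleGraph β)
    (b b' : β) : (joinGraph A B).Adj (Sum.inr b) (Sum.inr b') ↔ B.Adj b b' := by
  rw [joinGraph, SimpleGraph.fromRel_adj]
  constructor
  · rintro ⟨hne, h | h⟩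
    · exact h
    · exact h.symm
  · intro h
    exact ⟨by simpa using h.ne, Or.inl h⟩

lemma disjUnion_adj_inl_inr {α β : Type u} (A : SimpleGraph α) (B : SimpleGraph β)
    (a : α) (b : β) : ¬ (disjUnion A B).Adj (Sum.inl a) (Sum.inr b) := by
  rw [disjUnion, SimpleGraph.fromRel_adj]
  rintro ⟨-, h | h⟩ <;> exact h

lemma disjUnion_adj_inr_inl {α β : Type u} (A : SimpleGraph α) (B : SimpleGraph β)
    (a : α) (b : β) : ¬ (disjUnion A B).Adj (Sum.inr b) (Sum.inl a) := by
  rw [disjUnion, SimpleGraph.fromRel_adj]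
  rintro ⟨-, h | h⟩ <;> exact h

lemma disjUnion_adj_inl_inl {α β : Type u} (A : SimpleGraph α) (B : SimpleGraph β)
    (a a' : α) : (disjUnion A B).Adj (Sum.inl a) (Sum.inl a') ↔ A.Adj a a' := by
  rw [disjUnion, SimpleGraph.fromRel_adj]
  constructor
  · rintro ⟨hne, h | h⟩
    · exact h
    · exact h.symm
  · intro h
    exact ⟨by simpa using h.ne, Or.inl h⟩

lemma disjUnion_adj_inr_inr {α β : Type u} (A : SimpleGraph α) (B : SimpleGraph β)
    (b b' : β) : (disjUnion A B).Adj (Sum.inr b) (Sum.inr b') ↔ B.Adj b b' := by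
  rw [disjUnion, SimpleGraph.fromRel_adj]
  constructor
  · rintro ⟨hne, h | h⟩
    · exact h
    · exact h.symm
  · intro h
    exact ⟨by simpa using h.ne, Or.inl h⟩

lemma eexpr_no_adj : ∀ n, ∀ x y : (eexpr n).Vtx, ¬ (eexpr n).graph.Adj x y
  | 0 => fun x y h => by
      have : (⊥ : SimpleGraph Unit).Adj x y := h
      exact (SimpleGraph.bot_adj _ _).mp this
  | n + 1 => fun x y h => by
      have h' : (disjUnion CographExpr.single.graph (eexpr n).graph).Adj x y := h
      rcases x with x | x <;> rcases y with y | y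
      · rw [disjUnion_adj_inl_inl] at h'
        exact (SimpleGraph.bot_adj (V := Unit) x y).mp h'
      · exact disjUnion_adj_inl_inr _ _ _ _ h'
      · exact disjUnion_adj_inr_inl _ _ _ _ h'
      · rw [disjUnion_adj_inr_inr] at h'
        exact eexpr_no_adj n x y h'

lemma kexpr_adj : ∀ n, ∀ x y : (kexpr n).Vtx, (kexpr n).graph.Adj x y ↔ x ≠ y
  | 0 => fun x y => by
      haveI : Subsingleton (kexpr 0).Vtx := inferInstanceAs (Subsingleton Unit)
      constructor
      · intro h
        have h2 : (⊥ : SimpleGraph Unit).Adj x y := h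
        exact ((SimpleGraph.bot_adj _ _).mp h2).elim
      · intro h
        exact absurd (Subsingleton.elim x y) h
  | n + 1 => fun x y => by
      show (joinGraph CographExpr.single.graph (kexpr n).graph).Adj x y ↔ x ≠ y
      rcases x with x | x <;> rcases y with y | y
      · haveI : Subsingleton CographExpr.single.Vtx := inferInstanceAs (Subsingleton Unit)
        rw [joinGraph_adj_inl_inl]
        constructor
        · intro h
          have h2 : (⊥ : SimpleGraph Unit).Adj x y := h
          exact ((SimpleGraph.bot_adj _ _).mp h2).elim
        · intro h
          exact absurd (congrArg Sum.inl (Subsingleton.elim x y)) h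
      · exact iff_of_true (joinGraph_adj_inl_inr _ _ _ _) Sum.inl_ne_inr
      · exact iff_of_true (joinGraph_adj_inr_inl _ _ _ _) Sum.inr_ne_inl
      · rw [joinGraph_adj_inr_inr, kexpr_adj n]
        constructor
        · intro h hh
          exact h (Sum.inr_injective hh)
        · intro h hh
          exact h (congrArg Sum.inr hh)
      
/-- The gap cograph : `(E_{2m} ∪ K_m) ⋈ E_m`. -/
def Gexpr (m : ℕ) : CographExpr :=
  .cjoin (.dunion (eexpr (2 * m - 1)) (kexpr (m - 1))) (eexpr (m - 1))

end Construction

/-- For every `k ≥ 2` there is a cograph `G` with `h(G) ≥ k` and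
`mh(G) ≥ (3/2)·h(G) − 1` (stated as `3·h(G) ≤ 2·mh(G) + 2`). -/
theorem cograph_gap (k : ℕ) (hk : 2 ≤ k) :
    ∃ c : CographExpr, k ≤ hunterNum c.graph ∧
      3 * hunterNum c.graph ≤ 2 * mhunterNum c.graph + 2 := by
  classical
  haveI : Finite (Gexpr k).Vtx := finiteVtx _
  haveI : Finite (eexpr (2*k-1)).Vtx := finiteVtx _
  haveI : Finite (kexpr (k-1)).Vtx := finiteVtx _
  haveI : Finite (eexpr (k-1)).Vtx := finiteVtx _
  letI : Fintype (Gexpr k).Vtx := Fintype.ofFinite _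
  letI : Fintype (eexpr (2*k-1)).Vtx := Fintype.ofFinite _
  letI : Fintype (kexpr (k-1)).Vtx := Fintype.ofFinite _
  letI : Fintype (eexpr (k-1)).Vtx := Fintype.ofFinite _
  letI : DecidableEq (Gexpr k).Vtx := Classical.decEq _
  set G : SimpleGraph (Gexpr k).Vtx := (Gexpr k).graph with hG
  -- the three parts
  set Xf : Finset (Gexpr k).Vtx :=
    Finset.univ.image (fun a : (eexpr (2*k-1)).Vtx => (Sum.inl (Sum.inl a) : (Gexpr k).Vtx))
    with hXfdef
  set Kf : Finset (Gexpr k).Vtx :=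
    Finset.univ.image (fun b : (kexpr (k-1)).Vtx => (Sum.inl (Sum.inr b) : (Gexpr k).Vtx))
    with hKfdef
  set Wf : Finset (Gexpr k).Vtx :=
    Finset.univ.image (fun c : (eexpr (k-1)).Vtx => (Sum.inr c : (Gexpr k).Vtx))
    with hWfdef
  have hXmem : ∀ v, v ∈ Xf ↔ ∃ a, v = Sum.inl (Sum.inl a) := by
    intro v; exact ⟨fun h => by obtain ⟨a, -, ha⟩ := Finset.mem_image.mp h; exact ⟨a, ha.symm⟩,
      fun ⟨a, ha⟩ => Finset.mem_image.mpr ⟨a, Finset.mem_univ _, ha.symm⟩⟩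
  have hKmem : ∀ v, v ∈ Kf ↔ ∃ b, v = Sum.inl (Sum.inr b) := by
    intro v; exact ⟨fun h => by obtain ⟨b, -, ha⟩ := Finset.mem_image.mp h; exact ⟨b, ha.symm⟩,
      fun ⟨b, ha⟩ => Finset.mem_image.mpr ⟨b, Finset.mem_univ _, ha.symm⟩⟩
  have hWmem : ∀ v, v ∈ Wf ↔ ∃ c, v = Sum.inr c := by
    intro v; exact ⟨fun h => by obtain ⟨c, -, ha⟩ := Finset.mem_image.mp h; exact ⟨c, ha.symm⟩,
      fun ⟨c, ha⟩ => Finset.mem_image.mpr ⟨c, Finset.mem_univ _, ha.symm⟩⟩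
  -- adjacency facts
  have adjXXn : ∀ a a', ¬ G.Adj (Sum.inl (Sum.inl a)) (Sum.inl (Sum.inl a')) := by
    intro a a' h
    exact eexpr_no_adj _ a a'
      ((disjUnion_adj_inl_inl _ _ _ _).mp ((joinGraph_adj_inl_inl _ _ _ _).mp h))
  have adjXKn : ∀ a b, ¬ G.Adj (Sum.inl (Sum.inl a)) (Sum.inl (Sum.inr b)) := by
    intro a b h
    exact disjUnion_adj_inl_inr _ _ _ _ ((joinGraph_adj_inl_inl _ _ _ _).mp h)
  have adjKXn : ∀ b a, ¬ G.Adj (Sum.inl (Sum.inr b)) (Sum.inl (Sum.inl a)) := by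
    intro b a h
    exact disjUnion_adj_inr_inl _ _ _ _ ((joinGraph_adj_inl_inl _ _ _ _).mp h)
  have adjWWn : ∀ c c', ¬ G.Adj (Sum.inr c) (Sum.inr c') := by
    intro c c' h
    exact eexpr_no_adj _ c c' ((joinGraph_adj_inr_inr _ _ _ _).mp h)
  have adjKK : ∀ b b', G.Adj (Sum.inl (Sum.inr b)) (Sum.inl (Sum.inr b')) ↔ b ≠ b' := by
    intro b b'
    exact (joinGraph_adj_inl_inl _ _ _ _).trans
      ((disjUnion_adj_inr_inr _ _ _ _).trans (kexpr_adj _ b b'))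
  have adjLR : ∀ (d : (eexpr (2*k-1)).Vtx ⊕ (kexpr (k-1)).Vtx) (c : (eexpr (k-1)).Vtx),
      G.Adj (Sum.inl d) (Sum.inr c) := fun d c => joinGraph_adj_inl_inr _ _ d c
  have adjRL : ∀ (d : (eexpr (2*k-1)).Vtx ⊕ (kexpr (k-1)).Vtx) (c : (eexpr (k-1)).Vtx),
      G.Adj (Sum.inr c) (Sum.inl d) := fun d c => joinGraph_adj_inr_inl _ _ d c
  -- the setup
  have st : GapSetup G Xf Kf Wf k := by
    refine ⟨hk, ?_, ?_, ?_, ?_, ?_, ?_, ?_, ?_, ?_, ?_⟩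
    · have hc : Xf.card = (Finset.univ : Finset (eexpr (2*k-1)).Vtx).card :=
        Finset.card_image_of_injective _ (fun a b h => Sum.inl_injective (Sum.inl_injective h))
      rw [Finset.card_univ, ← Nat.card_eq_fintype_card, card_vtx_eexpr] at hc
      have : Xf.card = 2 * k - 1 + 1 := hc
      omega
    · have hc : Kf.card = (Finset.univ : Finset (kexpr (k-1)).Vtx).card :=
        Finset.card_image_of_injective _ (fun a b h => Sum.inr_injective (Sum.inl_injective h))
      rw [Finset.card_univ, ← Nat.card_eq_fintype_card, card_vtx_kexpr] at hc
      have : Kf.card = k - 1 + 1 := hc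
      omega
    · have hc : Wf.card = (Finset.univ : Finset (eexpr (k-1)).Vtx).card :=
        Finset.card_image_of_injective _ (fun a b h => Sum.inr_injective h)
      rw [Finset.card_univ, ← Nat.card_eq_fintype_card, card_vtx_eexpr] at hc
      have : Wf.card = k - 1 + 1 := hc
      omega
    · rw [Finset.disjoint_left]
      intro v hv hv'
      obtain ⟨a, rfl⟩ := (hXmem v).mp hv
      obtain ⟨b, heq⟩ := (hKmem _).mp hv'
      exact Sum.inl_ne_inr (Sum.inl_injective heq)
    · rw [Finset.disjoint_left]
      intro v hv hv'
      obtain ⟨a, rfl⟩ := (hXmem v).mp hv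
      obtain ⟨cc, heq⟩ := (hWmem _).mp hv'
      exact Sum.inl_ne_inr heq
    · rw [Finset.disjoint_left]
      intro v hv hv'
      obtain ⟨b, rfl⟩ := (hKmem v).mp hv
      obtain ⟨cc, heq⟩ := (hWmem _).mp hv'
      exact Sum.inl_ne_inr heq
    · intro v
      rcases v with (a | b) | cc
      · exact Or.inl ((hXmem _).mpr ⟨a, rfl⟩)
      · exact Or.inr (Or.inl ((hKmem _).mpr ⟨b, rfl⟩))
      · exact Or.inr (Or.inr ((hWmem _).mpr ⟨cc, rfl⟩))
    · -- adjX
      intro x hx v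
      obtain ⟨a, rfl⟩ := (hXmem x).mp hx
      rcases v with (a' | b) | cc
      · refine iff_of_false (adjXXn a a') ?_
        intro h
        obtain ⟨c2, heq⟩ := (hWmem _).mp h
        exact Sum.inl_ne_inr heq
      · refine iff_of_false (adjXKn a b) ?_
        intro h
        obtain ⟨c2, heq⟩ := (hWmem _).mp h
        exact Sum.inl_ne_inr heq
      · exact iff_of_true (adjLR _ cc) ((hWmem _).mpr ⟨cc, rfl⟩)
    · -- adjW
      intro w hw v
      obtain ⟨cc, rfl⟩ := (hWmem w).mp hw
      rcases v with (a | b) | cc'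
      · exact iff_of_true (adjRL _ cc) (Or.inl ((hXmem _).mpr ⟨a, rfl⟩))
      · exact iff_of_true (adjRL _ cc) (Or.inr ((hKmem _).mpr ⟨b, rfl⟩))
      · refine iff_of_false (adjWWn cc cc') ?_
        intro h
        rcases h with h | h
        · obtain ⟨a, heq⟩ := (hXmem _).mp h
          exact Sum.inr_ne_inl heq
        · obtain ⟨b, heq⟩ := (hKmem _).mp h
          exact Sum.inr_ne_inl heq
    · -- adjK
      intro kk hkk v
      obtain ⟨b, rfl⟩ := (hKmem kk).mp hkk
      rcases v with (a | b') | cc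
      · refine iff_of_false (adjKXn b a) ?_
        rintro (h | ⟨h, -⟩)
        · obtain ⟨c2, heq⟩ := (hWmem _).mp h
          exact Sum.inl_ne_inr heq
        · obtain ⟨b2, heq⟩ := (hKmem _).mp h
          exact Sum.inl_ne_inr (Sum.inl_injective heq)
      · refine (adjKK b b').trans ?_
        constructor
        · intro h
          exact Or.inr ⟨(hKmem _).mpr ⟨b', rfl⟩,
            fun heq => h (Sum.inr_injective (Sum.inl_injective heq)).symm⟩
        · rintro (h | ⟨-, hne⟩)
          · obtain ⟨c2, heq⟩ := (hWmem _).mp h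
            exact absurd heq (Sum.inl_ne_inr)
          · intro heq
            exact hne (by subst heq; rfl)
      · exact iff_of_true (adjLR _ cc) (Or.inl ((hWmem _).mpr ⟨cc, rfl⟩))
  obtain ⟨h1, h2⟩ := gap_main st
  exact ⟨Gexpr k, h1, h2⟩

end HuntersRabbit
end

section
/- Let S_{k,q}, for k ≥ 3 and q ≥ 6, be the spider tree obtained from q paths each with k edges by identifying one endpoint of every path into a common root c, and let (V_r, V_w) be its bipartition with c ∈ V_r. Then h(S_{k,q}) = mh_{V_r}(S_{k,q}) = 2. -/
open SimpleGraph

namespace HuntersRabbit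

universe u

variable {V : Type u}

/-- The spider `S_{k,q}`: `q` paths with `k` edges each, with one endpoint of
every path identified into a common root (the vertex `none`); `some (j, i)` is
the vertex of the `j`-th path at distance `i + 1` from the root. -/
def spider (k q : ℕ) : SimpleGraph (Option (Fin q × Fin k)) :=
  SimpleGraph.fromRel (fun x y =>
    match x, y with
    | none, some p => (p.2 : ℕ) = 0
    | some p, some p' => p.1 = p'.1 ∧ (p'.2 : ℕ) = (p.2 : ℕ) + 1
    | _, _ => False)

/-- The red side `V_r` of the bipartition of the spider: the vertices at even
distance from the root `c = none` (so `c ∈ V_r`). -/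
def spiderRed (k q : ℕ) : Set (Option (Fin q × Fin k)) :=
  {x | ∀ p : Fin q × Fin k, x = some p → (p.2 : ℕ) % 2 = 1}


/-! ### Auxiliary lemmas -/

section General

lemma Zset_mono {G : SimpleGraph V} {W W' : Set V} {S : List (Finset V)} (h : W ⊆ W') :
    ∀ i, Zset G W S i ⊆ Zset G W' S i
  | 0 => h
  | i + 1 => fun x ⟨y, hy, hn, ha⟩ => ⟨y, Zset_mono h i hy, hn, ha⟩

lemma Zset_union (G : SimpleGraph V) (W W' : Set V) (S : List (Finset V)) :
    ∀ i, Zset G (W ∪ W') S i = Zset G W S i ∪ Zset G W' S i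
  | 0 => rfl
  | i + 1 => by
    ext x
    simp only [Zset, Zset_union G W W' S i, Set.mem_union, Set.mem_setOf_eq]
    constructor
    · rintro ⟨y, hy | hy, h⟩
      · exact Or.inl ⟨y, hy, h⟩
      · exact Or.inr ⟨y, hy, h⟩
    · rintro (⟨y, hy, h⟩ | ⟨y, hy, h⟩)
      · exact ⟨y, Or.inl hy, h⟩
      · exact ⟨y, Or.inr hy, h⟩

lemma Zset_congr (G : SimpleGraph V) (W : Set V) (S S' : List (Finset V)) :
    ∀ i, (∀ m < i, shots S m = shots S' m) → Zset G W S i = Zset G W S' i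
  | 0, _ => rfl
  | i + 1, h => by
    have := Zset_congr G W S S' i (fun m hm => h m (by omega))
    simp only [Zset, this, h i (by omega)]

lemma Zset_empty_succ {G : SimpleGraph V} {W : Set V} {S : List (Finset V)} {n : ℕ}
    (h : Zset G W S n = ∅) : ∀ m, Zset G W S (n + m) = ∅ := by
  intro m
  induction m with
  | zero => exact h
  | succ m ih =>
    have h1 : n + (m + 1) = (n + m) + 1 := by omega
    rw [h1]
    ext x
    simp only [Zset, ih, Set.mem_empty_iff_false, Set.mem_setOf_eq, iff_false]
    rintro ⟨y, hy, -⟩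
    exact hy

lemma shots_append_left {A B : List (Finset V)} {i : ℕ} (h : i < A.length) :
    shots (A ++ B) i = shots A i := by
  simp only [shots, List.getD]
  rw [List.getElem?_append_left h]

lemma shots_append_right (A B : List (Finset V)) (m : ℕ) :
    shots (A ++ B) (A.length + m) = shots B m := by
  simp only [shots, List.getD]
  rw [List.getElem?_append_right (by omega)]
  have h2 : A.length + m - A.length = m := by omega
  rw [h2]

lemma Zset_append (G : SimpleGraph V) (W : Set V) (A B : List (Finset V)) :
    ∀ m, Zset G W (A ++ B) (A.length + m) = Zset G (Zset G W (A ++ B) A.length) B m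
  | 0 => rfl
  | m + 1 => by
    have h1 : A.length + (m + 1) = (A.length + m) + 1 := by omega
    rw [h1]
    have := Zset_append G W A B m
    simp only [Zset, this, shots_append_right A B m]

lemma isWinning_of_Zset_empty {G : SimpleGraph V} {W : Set V} {S : List (Finset V)}
    (h : Zset G W S S.length = ∅) : IsWinning G W S := by
  intro r ⟨hr0, hadj⟩
  by_contra hcon
  push_neg at hcon
  have key : ∀ i, i ≤ S.length → r i ∈ Zset G W S i := by
    intro i
    induction i with
    | zero => exact fun _ => hr0
    | succ i ih =>
      intro hi
      exact ⟨r i, ih (by omega), hcon i (by omega), hadj i (by omega)⟩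
  have := key S.length le_rfl
  rw [h] at this
  exact this

lemma not_isWinning_of_Zset_nonempty {G : SimpleGraph V} {W : Set V} {S : List (Finset V)}
    (h : (Zset G W S S.length).Nonempty) : ¬ IsWinning G W S := by
  have key : ∀ n, ∀ x ∈ Zset G W S n, ∃ r : ℕ → V, r 0 ∈ W ∧
      (∀ i, i < n → G.Adj (r i) (r (i + 1))) ∧ (∀ i, i < n → r i ∉ shots S i) ∧ r n = x := by
    intro n
    induction n with
    | zero => exact fun x hx => ⟨fun _ => x, hx, fun i h => by omega, fun i h => by omega, rfl⟩
    | succ n ih =>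
      rintro x ⟨y, hy, hns, hadj⟩
      obtain ⟨r, hr0, hra, hrs, hrn⟩ := ih y hy
      refine ⟨fun m => if m ≤ n then r m else x, by simpa using hr0, ?_, ?_, by simp⟩
      · intro i hi
        rcases Nat.lt_or_ge i n with h' | h'
        · simpa [Nat.le_of_lt h', Nat.succ_le_of_lt h', show i ≤ n by omega] using hra i h'
        · have : i = n := by omega
          subst this
          simpa [hrn, show ¬ (i+1 ≤ i) by omega] using hadj
      · intro i hi
        rcases Nat.lt_or_ge i n with h' | h'
        · simpa [show i ≤ n by omega] using hrs i h'
        · have : i = n := by omega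
          subst this
          simpa [hrn] using hns
  obtain ⟨x, hx⟩ := h
  obtain ⟨r, hr0, hra, hrs, -⟩ := key _ x hx
  intro hw
  obtain ⟨j, hj, hmem⟩ := hw r ⟨hr0, hra⟩
  exact hrs j hj hmem

lemma shots_map_range (f : ℕ → Finset V) {i L : ℕ} (h : i < L) :
    shots ((List.range L).map f) i = f i := by
  simp only [shots, List.getD, List.getElem?_map,
    List.getElem?_range h, Option.map_some, Option.getD_some]

end General

section SpiderAdj
variable {k q : ℕ}

lemma spider_adj_none_some (j : Fin q) (e : Fin k) :
    (spider k q).Adj none (some (j, e)) ↔ (e : ℕ) = 0 := by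
  simp [spider, SimpleGraph.fromRel_adj]

lemma spider_adj_some_some (j j' : Fin q) (e e' : Fin k) :
    (spider k q).Adj (some (j, e)) (some (j', e')) ↔
      j = j' ∧ ((e' : ℕ) = e + 1 ∨ (e : ℕ) = e' + 1) := by
  constructor
  · rintro ⟨hne, h | h⟩
    · exact ⟨h.1, Or.inl h.2⟩
    · exact ⟨h.1.symm, Or.inr h.2⟩
  · rintro ⟨rfl, h | h⟩
    · exact ⟨by simp [Prod.ext_iff, Fin.ext_iff]; omega, Or.inl ⟨rfl, h⟩⟩
    · exact ⟨by simp [Prod.ext_iff, Fin.ext_iff]; omega, Or.inr ⟨rfl, h⟩⟩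

lemma spider_adj_cases {x y : Option (Fin q × Fin k)} (h : (spider k q).Adj x y) :
    (∃ j e, x = none ∧ y = some (j, e) ∧ (e : ℕ) = 0) ∨
    (∃ j e, x = some (j, e) ∧ y = none ∧ (e : ℕ) = 0) ∨
    (∃ j e e', x = some (j, e) ∧ y = some (j, e') ∧
      ((e' : ℕ) = e + 1 ∨ (e : ℕ) = e' + 1)) := by
  match x, y with
  | none, none => exact absurd h (by simp)
  | none, some (j, e) => exact Or.inl ⟨j, e, rfl, rfl, (spider_adj_none_some j e).mp h⟩
  | some (j, e), none =>
    exact Or.inr (Or.inl ⟨j, e, rfl, rfl, (spider_adj_none_some j e).mp h.symm⟩)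
  | some (j, e), some (j', e') =>
    obtain ⟨rfl, h2⟩ := (spider_adj_some_some j j' e e').mp h
    exact Or.inr (Or.inr ⟨j, e, e', rfl, rfl, h2⟩)

lemma spiderRed_none : none ∈ spiderRed k q := fun p h => by cases h

lemma mem_spiderRed_some {j : Fin q} {e : Fin k} :
    some (j, e) ∈ spiderRed k q ↔ (e : ℕ) % 2 = 1 := by
  constructor
  · exact fun h => h (j, e) rfl
  · rintro h p hp
    rw [Option.some.injEq] at hp
    rw [← hp]
    exact h

/-- Depth of a vertex of the spider. -/
def dep : Option (Fin q × Fin k) → ℕ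
  | none => 0
  | some p => p.2.val + 1

lemma adj_dep {x y : Option (Fin q × Fin k)} (h : (spider k q).Adj y x) :
    dep x % 2 = (dep y + 1) % 2 := by
  rcases spider_adj_cases h with ⟨j, e, rfl, rfl, he⟩ | ⟨j, e, rfl, rfl, he⟩
    | ⟨j, e, e', rfl, rfl, hrel⟩ <;> simp [dep] <;> omega

lemma Zset_parity {W : Set (Option (Fin q × Fin k))}
    {S : List (Finset (Option (Fin q × Fin k)))} {t : ℕ}
    (hW : ∀ x ∈ W, dep x % 2 = t % 2) :
    ∀ i, ∀ x ∈ Zset (spider k q) W S i, dep x % 2 = (t + i) % 2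
  | 0, x, hx => by simpa using hW x hx
  | i + 1, x, ⟨y, hy, _, hadj⟩ => by
    have h1 := Zset_parity hW i y hy
    have h2 := adj_dep hadj
    omega

lemma spiderRed_dep : spiderRed k q = {x | dep x % 2 = 0} := by
  ext x
  match x with
  | none => simp [spiderRed_none, dep]
  | some (j, e) =>
    rw [mem_spiderRed_some]
    show _ ↔ (e.val + 1) % 2 = 0
    omega

end SpiderAdj

section OneHunter
variable {k q : ℕ}

/-- One hunter cannot catch the rabbit on the spider. -/
lemma one_hunter_Zset_nonempty (hk : 3 ≤ k) (hq : 6 ≤ q)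
    {W : Set (Option (Fin q × Fin k))} (hc : none ∈ W)
    (hb : ∀ j : Fin q, some (j, ⟨1, by omega⟩) ∈ W)
    {S : List (Finset (Option (Fin q × Fin k)))} (hS : Uses S 1) :
    ∀ n, (Zset (spider k q) W S n).Nonempty := by
  have h0 : (0 : ℕ) < k := by omega
  have h1 : (1 : ℕ) < k := by omega
  have h2 : (2 : ℕ) < k := by omega
  set G := spider k q
  set A : Fin q → Option (Fin q × Fin k) := fun j => some (j, ⟨0, h0⟩) with hA
  set B : Fin q → Option (Fin q × Fin k) := fun j => some (j, ⟨1, h1⟩) with hB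
  set D : Fin q → Option (Fin q × Fin k) := fun j => some (j, ⟨2, h2⟩) with hD
  have adjCA : ∀ j, G.Adj none (A j) := fun j => (spider_adj_none_some _ _).mpr rfl
  have adjAB : ∀ j, G.Adj (A j) (B j) :=
    fun j => (spider_adj_some_some _ _ _ _).mpr ⟨rfl, Or.inl rfl⟩
  have adjBD : ∀ j, G.Adj (B j) (D j) :=
    fun j => (spider_adj_some_some _ _ _ _).mpr ⟨rfl, Or.inl rfl⟩
  have shot_card : ∀ n, (shots S n).card ≤ 1 := by
    intro n
    unfold shots List.getD
    cases hg : S[n]? with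
    | none => simp
    | some s => simpa using hS s (List.mem_of_getElem? hg)
  have shot_eq : ∀ n (x y : Option (Fin q × Fin k)),
      x ∈ shots S n → y ∈ shots S n → x = y := by
    intro n x y hx hy
    exact Finset.card_le_one.mp (shot_card n) x hx y hy
  have inv : ∀ n, (n % 2 = 0 → none ∈ Zset G W S n ∧
        ∃ j1 j2 : Fin q, j1 ≠ j2 ∧ B j1 ∈ Zset G W S n ∧ B j2 ∈ Zset G W S n) ∧
      (n % 2 = 1 →
        ((∃ j1 j2 : Fin q, j1 ≠ j2 ∧ A j1 ∈ Zset G W S n ∧ D j1 ∈ Zset G W S n ∧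
          A j2 ∈ Zset G W S n ∧ D j2 ∈ Zset G W S n) ∨ (∀ j, A j ∈ Zset G W S n))) := by
    intro n
    induction n with
    | zero =>
      refine ⟨fun _ => ⟨hc, (⟨0, by omega⟩ : Fin q), (⟨1, by omega⟩ : Fin q), ?_, hb _, hb _⟩,
        fun h => by omega⟩
      simp [Fin.ext_iff]
    | succ n ih =>
      rcases Nat.even_or_odd n with he | ho
      · have hn0 : n % 2 = 0 := Nat.even_iff.mp he
        obtain ⟨hcZ, j1, j2, hjj, hB1, hB2⟩ := ih.1 hn0
        refine ⟨fun h => by omega, fun _ => ?_⟩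
        by_cases hcs : none ∈ shots S n
        · left
          have hB1s : B j1 ∉ shots S n := fun h => by
            have := shot_eq n _ _ h hcs; simp [hB] at this
          have hB2s : B j2 ∉ shots S n := fun h => by
            have := shot_eq n _ _ h hcs; simp [hB] at this
          exact ⟨j1, j2, hjj,
            ⟨B j1, hB1, hB1s, (adjAB j1).symm⟩, ⟨B j1, hB1, hB1s, adjBD j1⟩,
            ⟨B j2, hB2, hB2s, (adjAB j2).symm⟩, ⟨B j2, hB2, hB2s, adjBD j2⟩⟩
        · right
          exact fun j => ⟨none, hcZ, hcs, adjCA j⟩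
      · have hn1 : n % 2 = 1 := Nat.odd_iff.mp ho
        refine ⟨fun _ => ?_, fun h => by omega⟩
        rcases ih.2 hn1 with ⟨j1, j2, hjj, hA1, hD1, hA2, hD2⟩ | hall
        · have hcZ : none ∈ Zset G W S (n+1) := by
            by_cases h1s : A j1 ∈ shots S n
            · have h2s : A j2 ∉ shots S n := fun h => by
                have := shot_eq n _ _ h h1s
                simp [hA, Prod.ext_iff, Fin.ext_iff] at this
                exact hjj (by apply Fin.ext; omega)
              exact ⟨A j2, hA2, h2s, (adjCA j2).symm⟩
            · exact ⟨A j1, hA1, h1s, (adjCA j1).symm⟩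
          have hBj : ∀ j, A j ∈ Zset G W S n → D j ∈ Zset G W S n →
              B j ∈ Zset G W S (n+1) := by
            intro j hAj hDj
            by_cases hs : A j ∈ shots S n
            · have : D j ∉ shots S n := fun h => by
                have := shot_eq n _ _ h hs
                simp [hA, hD, Prod.ext_iff, Fin.ext_iff] at this
              exact ⟨D j, hDj, this, (adjBD j).symm⟩
            · exact ⟨A j, hAj, hs, adjAB j⟩
          exact ⟨hcZ, j1, j2, hjj, hBj j1 hA1 hD1, hBj j2 hA2 hD2⟩
        · have hdist : ∀ (a b : Fin q), a ≠ b → A a ∈ shots S n → A b ∉ shots S n := by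
            intro a b hab ha hbmem
            have := shot_eq n _ _ ha hbmem
            simp [hA, Prod.ext_iff, Fin.ext_iff] at this
            exact hab (by apply Fin.ext; omega)
          have : ∃ a b : Fin q, a ≠ b ∧ A a ∉ shots S n ∧ A b ∉ shots S n := by
            by_cases h0s : A ⟨0, by omega⟩ ∈ shots S n
            · exact ⟨⟨1, by omega⟩, ⟨2, by omega⟩, by simp [Fin.ext_iff],
                hdist _ _ (by simp [Fin.ext_iff]) h0s, hdist _ _ (by simp [Fin.ext_iff]) h0s⟩
            · by_cases h1s : A ⟨1, by omega⟩ ∈ shots S n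
              · exact ⟨⟨0, by omega⟩, ⟨2, by omega⟩, by simp [Fin.ext_iff],
                  h0s, hdist _ _ (Fin.ne_of_val_ne (by norm_num)) h1s⟩
              · exact ⟨⟨0, by omega⟩, ⟨1, by omega⟩, by simp [Fin.ext_iff], h0s, h1s⟩
          obtain ⟨a, b, hab, has, hbs⟩ := this
          exact ⟨⟨A a, hall a, has, (adjCA a).symm⟩, a, b, hab,
            ⟨A a, hall a, has, adjAB a⟩, ⟨A b, hall b, hbs, adjAB b⟩⟩
  intro n
  rcases Nat.even_or_odd n with he | ho
  · exact ⟨none, ((inv n).1 (Nat.even_iff.mp he)).1⟩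
  · rcases (inv n).2 (Nat.odd_iff.mp ho) with ⟨j1, j2, -, hA1, -⟩ | hall
    · exact ⟨A j1, hA1⟩
    · exact ⟨A ⟨0, by omega⟩, hall _⟩

lemma two_le_of_winning (hk : 3 ≤ k) (hq : 6 ≤ q)
    {W : Set (Option (Fin q × Fin k))} (hc : none ∈ W)
    (hb : ∀ j : Fin q, some (j, ⟨1, by omega⟩) ∈ W)
    {S : List (Finset (Option (Fin q × Fin k)))} {m : ℕ}
    (hw : IsWinning (spider k q) W S) (hu : Uses S m) : 2 ≤ m := by
  by_contra h
  have hu1 : Uses S 1 := fun s hs => le_trans (hu s hs) (by omega)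
  exact not_isWinning_of_Zset_nonempty
    (one_hunter_Zset_nonempty hk hq hc hb hu1 S.length) hw

end OneHunter

section Sweep

/-- Even number `≥ k`: the spacing between consecutive leg sweeps. -/
def Kk (k : ℕ) : ℕ := k + k % 2
lemma Kk_even (k : ℕ) : Kk k % 2 = 0 := by unfold Kk; omega
lemma le_Kk (k : ℕ) : k ≤ Kk k := by unfold Kk; omega

/-- The shots of the two-hunter sweep strategy: always shoot the centre, and at
round `1 + j * Kk k + e` shoot the vertex of leg `j` at depth `e + 1`. -/
def fshot (k q : ℕ) (i : ℕ) : Finset (Option (Fin q × Fin k)) :=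
  if h : 1 ≤ i ∧ (i-1)/(Kk k) < q ∧ (i-1) % (Kk k) < k then
    insert none {some (⟨(i-1)/(Kk k), h.2.1⟩, ⟨(i-1) % (Kk k), h.2.2⟩)}
  else {none}

lemma none_mem_fshot (k q i : ℕ) : none ∈ fshot k q i := by
  unfold fshot; split_ifs <;> simp

lemma fshot_nonempty (k q i : ℕ) : (fshot k q i).Nonempty :=
  ⟨none, none_mem_fshot k q i⟩

lemma fshot_card (k q i : ℕ) : (fshot k q i).card ≤ 2 := by
  unfold fshot
  split_ifs
  · exact le_trans (Finset.card_insert_le _ _) (by simp)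
  · simp

lemma some_mem_fshot {k q : ℕ} (hk : 3 ≤ k) (j : Fin q) (e : Fin k) (i : ℕ) :
    some (j, e) ∈ fshot k q i ↔ i = 1 + j.val * Kk k + e.val := by
  have hKpos : 0 < Kk k := by have := le_Kk k; omega
  have heK : e.val < Kk k := lt_of_lt_of_le e.isLt (le_Kk k)
  unfold fshot
  split_ifs with h
  · simp only [Finset.mem_insert, Finset.mem_singleton, Option.some.injEq,
      Prod.mk.injEq, Fin.ext_iff]
    constructor
    · rintro (h' | ⟨h1, h2⟩)
      · exact absurd h' (by simp)
      · obtain ⟨hi1, -, -⟩ := h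
        have hdm := Nat.div_add_mod (i-1) (Kk k)
        rw [← h1, ← h2] at hdm
        have hcomm : Kk k * j.val = j.val * Kk k := Nat.mul_comm _ _
        omega
    · intro hi
      refine Or.inr ⟨?_, ?_⟩
      · have : i - 1 = e.val + j.val * Kk k := by omega
        rw [this, Nat.add_mul_div_right _ _ hKpos, Nat.div_eq_of_lt heK]; omega
      · have : i - 1 = e.val + j.val * Kk k := by omega
        rw [this, Nat.add_mul_mod_self_right, Nat.mod_eq_of_lt heK]
  · simp only [Finset.mem_singleton]
    constructor
    · intro h'; exact absurd h' (by simp)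
    · intro hi
      exfalso; apply h
      have h1 : i - 1 = e.val + j.val * Kk k := by omega
      refine ⟨by omega, ?_, ?_⟩
      · rw [h1, Nat.add_mul_div_right _ _ hKpos, Nat.div_eq_of_lt heK]
        simp only [Nat.zero_add]
        exact j.isLt
      · rw [h1, Nat.add_mul_mod_self_right, Nat.mod_eq_of_lt heK]
        exact e.isLt

/-- The exact contaminated set of the sweep strategy at time `i`. -/
def Esp (k q : ℕ) (i : ℕ) : Set (Option (Fin q × Fin k)) :=
  {x | match x with
    | none => i % 2 = 0 ∧ i ≤ (q-1) * Kk k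
    | some (j, e) => (e.val + 1) % 2 = i % 2 ∧ i ≤ j.val * Kk k + e.val + 1 ∧
        (e.val + 2 ≤ k ∨ i ≤ j.val * Kk k + e.val)}

lemma mem_Esp_none {k q i : ℕ} :
    (none ∈ Esp k q i) ↔ (i % 2 = 0 ∧ i ≤ (q-1) * Kk k) := Iff.rfl

lemma mem_Esp_some {k q i : ℕ} {j : Fin q} {e : Fin k} :
    (some (j, e) ∈ Esp k q i) ↔ ((e.val + 1) % 2 = i % 2 ∧ i ≤ j.val * Kk k + e.val + 1 ∧
        (e.val + 2 ≤ k ∨ i ≤ j.val * Kk k + e.val)) := Iff.rfl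

lemma jK_even {k : ℕ} (j : ℕ) : (j * Kk k) % 2 = 0 := by
  rw [Nat.mul_mod, Kk_even]; simp

lemma Esp_empty {k q : ℕ} (hk : 3 ≤ k) (hq : 6 ≤ q) {i : ℕ}
    (hi : 1 + (q-1) * Kk k + k ≤ i) : Esp k q i = ∅ := by
  ext x
  simp only [Set.mem_empty_iff_false, iff_false]
  match x with
  | none => rw [mem_Esp_none]; omega
  | some (j, e) =>
    rw [mem_Esp_some]
    have hj : j.val * Kk k ≤ (q-1) * Kk k :=
      Nat.mul_le_mul_right _ (by have := j.isLt; omega)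
    have he := e.isLt
    omega

/-- The central computation: the contaminated sets of the sweep strategy,
starting from the red side. -/
lemma Zset_f_eq {k q : ℕ} (hk : 3 ≤ k) (hq : 6 ≤ q) (L : ℕ) :
    ∀ i, i ≤ L →
      Zset (spider k q) (spiderRed k q) ((List.range L).map (fshot k q)) i = Esp k q i := by
  intro i
  induction i with
  | zero =>
    intro _
    ext x
    match x with
    | none => simp [Zset, mem_Esp_none, spiderRed_none]
    | some (j, e) =>
      show some (j,e) ∈ spiderRed k q ↔ _
      rw [mem_spiderRed_some, mem_Esp_some]
      have := e.isLt
      constructor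
      · intro h; exact ⟨by omega, by omega, Or.inr (by omega)⟩
      · rintro ⟨h, -, -⟩; omega
  | succ i ih =>
    intro hiL
    have hI := ih (by omega)
    have hilt : i < L := by omega
    ext x
    simp only [Zset, Set.mem_setOf_eq, hI, shots_map_range _ hilt]
    constructor
    · rintro ⟨y, hyE, hyns, hadj⟩
      match y with
      | none => exact absurd (none_mem_fshot k q i) hyns
      | some (j, e) =>
        rw [mem_Esp_some] at hyE
        obtain ⟨hp, hb, hor⟩ := hyE
        rw [some_mem_fshot hk] at hyns
        have hme := jK_even (k := k) j.val
        have hek := e.isLt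
        have hkey : i + 1 ≤ j.val * Kk k + e.val := by omega
        rcases spider_adj_cases hadj with ⟨j', e', hcon, -, -⟩ | ⟨j', e', hy', rfl, he0⟩
          | ⟨j', e', e'', hy', rfl, hrel⟩
        · exact absurd hcon (by simp)
        · simp only [Option.some.injEq, Prod.mk.injEq] at hy'
          obtain ⟨rfl, rfl⟩ := hy'
          rw [mem_Esp_none]
          have hj2 : j.val * Kk k ≤ (q-1) * Kk k :=
            Nat.mul_le_mul_right _ (by have := j.isLt; omega)
          omega
        · simp only [Option.some.injEq, Prod.mk.injEq] at hy'
          obtain ⟨rfl, rfl⟩ := hy'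
          rw [mem_Esp_some]
          have hek' := e''.isLt
          refine ⟨by omega, by omega, ?_⟩
          rcases hrel with h' | h'
          · exact Or.inr (by omega)
          · exact Or.inl (by omega)
    · intro hx
      match x with
      | none =>
        rw [mem_Esp_none] at hx
        obtain ⟨hp2, hb2⟩ := hx
        refine ⟨some (⟨q-1, by omega⟩, ⟨0, by omega⟩), ?_, ?_, ?_⟩
        · rw [mem_Esp_some]
          simp only [Fin.val_mk]
          exact ⟨by omega, by omega, Or.inl (by omega)⟩
        · rw [some_mem_fshot hk]
          simp only [Fin.val_mk]
          omega
        · exact ((spider_adj_none_some _ _).mpr rfl).symm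
      | some (j, e) =>
        rw [mem_Esp_some] at hx
        obtain ⟨hp, hb, hor⟩ := hx
        have hme := jK_even (k := k) j.val
        have hek := e.isLt
        by_cases hcase : e.val + 1 < k
        · refine ⟨some (j, ⟨e.val + 1, hcase⟩), ?_, ?_, ?_⟩
          · rw [mem_Esp_some]
            simp only [Fin.val_mk]
            exact ⟨by omega, by omega, Or.inr (by omega)⟩
          · rw [some_mem_fshot hk]
            simp only [Fin.val_mk]
            omega
          · exact (spider_adj_some_some _ _ _ _).mpr ⟨rfl, Or.inr (by simp [Fin.val_mk])⟩
        · have hek1 : e.val + 1 = k := by omega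
          have hi2 : i + 1 ≤ j.val * Kk k + e.val := by omega
          have he1 : 1 ≤ e.val := by omega
          refine ⟨some (j, ⟨e.val - 1, by omega⟩), ?_, ?_, ?_⟩
          · rw [mem_Esp_some]
            simp only [Fin.val_mk]
            exact ⟨by omega, by omega, Or.inl (by omega)⟩
          · rw [some_mem_fshot hk]
            simp only [Fin.val_mk]
            omega
          · exact (spider_adj_some_some _ _ _ _).mpr
              ⟨rfl, Or.inl (by simp only [Fin.val_mk]; omega)⟩

/-- Length of one sweep phase. -/
def LTn (k q : ℕ) : ℕ := 1 + (q-1) * Kk k + k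
/-- Length of one sweep phase, padded to be even. -/
def LLn (k q : ℕ) : ℕ := LTn k q + LTn k q % 2

/-- The (monotone, two-hunter) sweep strategy catching a red rabbit. -/
def T1 (k q : ℕ) : List (Finset (Option (Fin q × Fin k))) :=
  (List.range (LLn k q)).map (fshot k q)

/-- The shorter sweep used as second phase. -/
def Tw (k q : ℕ) : List (Finset (Option (Fin q × Fin k))) :=
  (List.range (LTn k q)).map (fshot k q)

/-- The two-phase strategy catching an arbitrary rabbit. -/
def Tfull (k q : ℕ) : List (Finset (Option (Fin q × Fin k))) :=
  T1 k q ++ ({none} :: Tw k q)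

lemma T1_length (k q : ℕ) : (T1 k q).length = LLn k q := by simp [T1]
lemma Tw_length (k q : ℕ) : (Tw k q).length = LTn k q := by simp [Tw]

lemma LTn_le_LLn (k q : ℕ) : LTn k q ≤ LLn k q := by unfold LLn; omega
lemma LLn_even (k q : ℕ) : LLn k q % 2 = 0 := by unfold LLn; omega

lemma T1_valid (k q : ℕ) : ValidStrategy (T1 k q) := by
  intro s hs
  rw [T1, List.mem_map] at hs
  obtain ⟨i, -, rfl⟩ := hs
  exact fshot_nonempty k q i

lemma T1_uses (k q : ℕ) : Uses (T1 k q) 2 := by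
  intro s hs
  rw [T1, List.mem_map] at hs
  obtain ⟨i, -, rfl⟩ := hs
  exact fshot_card k q i

lemma Tfull_valid (k q : ℕ) : ValidStrategy (Tfull k q) := by
  intro s hs
  rw [Tfull, List.mem_append, List.mem_cons] at hs
  rcases hs with hs | hs | hs
  · exact T1_valid k q s hs
  · subst hs; simp
  · rw [Tw, List.mem_map] at hs
    obtain ⟨i, -, rfl⟩ := hs
    exact fshot_nonempty k q i

lemma Tfull_uses (k q : ℕ) : Uses (Tfull k q) 2 := by
  intro s hs
  rw [Tfull, List.mem_append, List.mem_cons] at hs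
  rcases hs with hs | hs | hs
  · exact T1_uses k q s hs
  · subst hs; simp
  · rw [Tw, List.mem_map] at hs
    obtain ⟨i, -, rfl⟩ := hs
    exact fshot_card k q i

lemma T1_Zset_end {k q : ℕ} (hk : 3 ≤ k) (hq : 6 ≤ q) :
    Zset (spider k q) (spiderRed k q) (T1 k q) (LLn k q) = ∅ := by
  rw [T1, Zset_f_eq hk hq _ _ le_rfl]
  exact Esp_empty hk hq (LTn_le_LLn k q)

lemma T1_winning {k q : ℕ} (hk : 3 ≤ k) (hq : 6 ≤ q) :
    IsWinning (spider k q) (spiderRed k q) (T1 k q) := by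
  apply isWinning_of_Zset_empty
  rw [T1_length]
  exact T1_Zset_end hk hq

lemma T1_mono {k q : ℕ} (hk : 3 ≤ k) (hq : 6 ≤ q) :
    IsMonotoneStrat (spider k q) (spiderRed k q) (T1 k q) := by
  intro v i j hi hij hj hcl hvZ
  rw [T1_length] at hi hj
  rw [T1, Zset_f_eq hk hq (LLn k q) j (le_of_lt hj)] at hvZ
  rw [T1, shots_map_range _ hj]
  match v with
  | none => exact none_mem_fshot k q j
  | some (j₀, e) =>
    rw [mem_Esp_some] at hvZ
    obtain ⟨hp, hb, hor⟩ := hvZ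
    rw [some_mem_fshot hk]
    by_contra hne
    have hme := jK_even (k := k) j₀.val
    have hek := e.isLt
    have hi2 : i + 2 ≤ j₀.val * Kk k + e.val := by omega
    rcases hcl with hsh | ⟨⟨w, hw⟩, hsub⟩
    · rw [T1, shots_map_range _ (show i < LLn k q by omega), some_mem_fshot hk] at hsh
      omega
    · have hZi := Zset_f_eq hk hq (LLn k q) i (by omega)
      have hwadj : (spider k q).Adj (some (j₀, e)) w := hw.1
      have hwZ := hw.2
      rw [show Zset (spider k q) (spiderRed k q) (T1 k q) = Zset (spider k q) (spiderRed k q)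
        ((List.range (LLn k q)).map (fshot k q)) from rfl, hZi] at hwZ
      have hpar : i % 2 = e.val % 2 := by
        rcases spider_adj_cases hwadj with ⟨j', e', hcon, -, -⟩ | ⟨j', e', hy', rfl, he0⟩
          | ⟨j', e', e'', hy', rfl, hrel⟩
        · exact absurd hcon (by simp)
        · simp only [Option.some.injEq, Prod.mk.injEq] at hy'
          obtain ⟨rfl, rfl⟩ := hy'
          rw [mem_Esp_none] at hwZ
          omega
        · simp only [Option.some.injEq, Prod.mk.injEq] at hy'
          obtain ⟨rfl, rfl⟩ := hy'
          rw [mem_Esp_some] at hwZ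
          omega
      by_cases he1 : 1 ≤ e.val
      · have huN : some (j₀, (⟨e.val - 1, by omega⟩ : Fin k)) ∈
            (spider k q).neighborSet (some (j₀, e)) :=
          (spider_adj_some_some _ _ _ _).mpr ⟨rfl, Or.inr (by simp only [Fin.val_mk]; omega)⟩
        have huZ : some (j₀, (⟨e.val - 1, by omega⟩ : Fin k)) ∈
            Zset (spider k q) (spiderRed k q) (T1 k q) i := by
          show _ ∈ Zset (spider k q) (spiderRed k q) ((List.range (LLn k q)).map (fshot k q)) i
          rw [hZi, mem_Esp_some]
          simp only [Fin.val_mk]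
          exact ⟨by omega, by omega, Or.inl (by omega)⟩
        have hsb := hsub (Set.mem_inter huN huZ)
        rw [Finset.mem_coe, T1, shots_map_range _ (show i < LLn k q by omega),
          some_mem_fshot hk] at hsb
        simp only [Fin.val_mk] at hsb
        omega
      · have he0 : e.val = 0 := by omega
        have huN : some (j₀, (⟨1, by omega⟩ : Fin k)) ∈
            (spider k q).neighborSet (some (j₀, e)) :=
          (spider_adj_some_some _ _ _ _).mpr ⟨rfl, Or.inl (by simp only [Fin.val_mk]; omega)⟩
        have huZ : some (j₀, (⟨1, by omega⟩ : Fin k)) ∈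
            Zset (spider k q) (spiderRed k q) (T1 k q) i := by
          show _ ∈ Zset (spider k q) (spiderRed k q) ((List.range (LLn k q)).map (fshot k q)) i
          rw [hZi, mem_Esp_some]
          simp only [Fin.val_mk]
          exact ⟨by omega, by omega, Or.inl (by omega)⟩
        have hsb := hsub (Set.mem_inter huN huZ)
        rw [Finset.mem_coe, T1, shots_map_range _ (show i < LLn k q by omega),
          some_mem_fshot hk] at hsb
        simp only [Fin.val_mk] at hsb
        omega

lemma Tfull_winning {k q : ℕ} (hk : 3 ≤ k) (hq : 6 ≤ q) :
    IsWinning (spider k q) Set.univ (Tfull k q) := by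
  classical
  set G := spider k q
  set Wo : Set (Option (Fin q × Fin k)) := {x | dep x % 2 = 1} with hWo
  have huniv : (Set.univ : Set (Option (Fin q × Fin k))) = spiderRed k q ∪ Wo := by
    rw [spiderRed_dep]
    ext x
    simp only [Set.mem_univ, Set.mem_union, Set.mem_setOf_eq, true_iff, hWo]
    omega
  apply isWinning_of_Zset_empty
  have hlen : (Tfull k q).length = LLn k q + (1 + LTn k q) := by
    simp [Tfull, T1, Tw]
    omega
  rw [hlen, huniv, Zset_union]
  -- red part
  have hredT : Zset G (spiderRed k q) (Tfull k q) (LLn k q) = ∅ := by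
    rw [Zset_congr G _ (Tfull k q) (T1 k q) (LLn k q)
      (fun m hm => shots_append_left (by rw [T1_length]; omega))]
    exact T1_Zset_end hk hq
  have hred : Zset G (spiderRed k q) (Tfull k q) (LLn k q + (1 + LTn k q)) = ∅ :=
    Zset_empty_succ hredT (1 + LTn k q)
  -- white part
  have e1 : Zset G Wo (Tfull k q) (LLn k q + (1 + LTn k q)) =
      Zset G (Zset G Wo (Tfull k q) (LLn k q)) ({none} :: Tw k q) (1 + LTn k q) := by
    have h := Zset_append G Wo (T1 k q) ({none} :: Tw k q) (1 + LTn k q)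
    rw [T1_length] at h
    exact h
  have e2 : Zset G (Zset G Wo (Tfull k q) (LLn k q)) ({none} :: Tw k q) (1 + LTn k q) =
      Zset G (Zset G (Zset G Wo (Tfull k q) (LLn k q)) ({none} :: Tw k q) 1)
        (Tw k q) (LTn k q) := by
    have h := Zset_append G (Zset G Wo (Tfull k q) (LLn k q)) [{none}] (Tw k q) (LTn k q)
    simpa using h
  have hXw : ∀ x ∈ Zset G Wo (Tfull k q) (LLn k q), dep x % 2 = 1 := by
    intro x hx
    have h := Zset_parity (W := Wo) (t := 1) (fun y hy => hy) (LLn k q) x hx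
    have := LLn_even k q
    omega
  have hY : Zset G (Zset G Wo (Tfull k q) (LLn k q)) ({none} :: Tw k q) 1 ⊆
      spiderRed k q := by
    rintro x ⟨y, hy, -, hadj⟩
    have h1 := hXw y hy
    have h2 := adj_dep hadj
    rw [spiderRed_dep]
    show dep x % 2 = 0
    omega
  have hwhite : Zset G Wo (Tfull k q) (LLn k q + (1 + LTn k q)) = ∅ := by
    rw [e1, e2]
    apply Set.subset_eq_empty (s := Zset G (spiderRed k q) (Tw k q) (LTn k q))
    · exact Zset_mono hY (LTn k q)
    · rw [Tw, Zset_f_eq hk hq _ _ le_rfl]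
      exact Esp_empty hk hq le_rfl
  rw [hred, hwhite, Set.empty_union]

end Sweep

/-- For `k ≥ 3` and `q ≥ 6`, `h(S_{k,q}) = mh_{V_r}(S_{k,q}) = 2`. -/
theorem spider_hunter_numbers (k q : ℕ) (hk : 3 ≤ k) (hq : 6 ≤ q) :
    hunterNum (spider k q) = 2 ∧
      mhunterNumW (spider k q) (spiderRed k q) = 2 := by
  have hcard : ¬ (Nat.card (Option (Fin q × Fin k)) = 1) := by
    have h1 : Nat.card (Option (Fin q × Fin k)) = q * k + 1 := by
      simp [Nat.card_eq_fintype_card, Fintype.card_option, Fintype.card_prod]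
    have h2 : 0 < q * k := Nat.mul_pos (by omega) (by omega)
    omega
  constructor
  · rw [hunterNum, hunterNumW, if_neg hcard]
    have hmem : 2 ∈ {m | ∃ S : List (Finset (Option (Fin q × Fin k))),
        ValidStrategy S ∧ IsWinning (spider k q) Set.univ S ∧ Uses S m} :=
      ⟨Tfull k q, Tfull_valid k q, Tfull_winning hk hq, Tfull_uses k q⟩
    apply le_antisymm
    · exact Nat.sInf_le hmem
    · apply le_csInf ⟨2, hmem⟩
      rintro b ⟨S, -, hwin, hus⟩
      exact two_le_of_winning hk hq (Set.mem_univ _) (fun j => Set.mem_univ _) hwin hus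
  · rw [mhunterNumW, if_neg hcard]
    have hmem : 2 ∈ {m | ∃ S : List (Finset (Option (Fin q × Fin k))),
        ValidStrategy S ∧ IsWinning (spider k q) (spiderRed k q) S ∧
          IsMonotoneStrat (spider k q) (spiderRed k q) S ∧ Uses S m} :=
      ⟨T1 k q, T1_valid k q, T1_winning hk hq, T1_mono hk hq, T1_uses k q⟩
    apply le_antisymm
    · exact Nat.sInf_le hmem
    · apply le_csInf ⟨2, hmem⟩
      rintro b ⟨S, -, hwin, -, hus⟩
      refine two_le_of_winning hk hq spiderRed_none (fun j => ?_) hwin hus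
      rw [mem_spiderRed_some]
      simp only [Fin.val_mk]

end HuntersRabbit
end

section
/- For every finite simple connected graph G, h(G) ≤ mh(G) ≤ vc(G), where vc(G) is the vertex cover number of G. -/
open SimpleGraph

namespace HuntersRabbit

universe u

variable {V : Type u}

/-- The vertex cover number of `G`: the minimum size of a set of vertices
meeting every edge. -/
noncomputable def vertexCoverNum (G : SimpleGraph V) : ℕ :=
  sInf {n | ∃ U : Finset V, (∀ u v : V, G.Adj u v → u ∈ U ∨ v ∈ U) ∧ U.card = n}

/-- For every finite simple connected graph `G`, `h(G) ≤ mh(G) ≤ vc(G)`. -/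
theorem hunterNum_le_mhunterNum_le_vertexCoverNum {V : Type} [Fintype V]
    (G : SimpleGraph V) (hG : G.Connected) :
    hunterNum G ≤ mhunterNum G ∧ mhunterNum G ≤ vertexCoverNum G := by
  unfold hunterNum mhunterNum hunterNumW mhunterNumW
  by_cases h1 : Nat.card V = 1
  · rw [Nat.card_eq_fintype_card] at h1
    simp [h1]
  simp only [h1, if_false]
  have hne : Nonempty V := hG.nonempty
  have hcard : 2 ≤ Nat.card V := by
    have : 1 ≤ Nat.card V := Nat.one_le_iff_ne_zero.mpr (by simp [Nat.card_eq_fintype_card,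
      Fintype.card_ne_zero])
    omega
  -- get a minimal vertex cover U
  have hSne : ({n | ∃ U : Finset V, (∀ u v : V, G.Adj u v → u ∈ U ∨ v ∈ U) ∧ U.card = n} :
      Set ℕ).Nonempty := ⟨(Finset.univ : Finset V).card, Finset.univ, fun u v _ => Or.inl
        (Finset.mem_univ u), rfl⟩
  have hmem := Nat.sInf_mem hSne
  obtain ⟨U, hUcov, hUcard⟩ := hmem
  -- U is nonempty since G has an edge
  obtain ⟨u, v, huv⟩ : ∃ u v : V, u ≠ v := by
    rw [Nat.card_eq_fintype_card] at hcard
    exact Fintype.exists_pair_of_one_lt_card hcard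
  have hadj : ∃ a b : V, G.Adj a b := by
    obtain ⟨p⟩ := hG.preconnected u v
    cases p with
    | nil => exact absurd rfl huv
    | cons h q => exact ⟨_, _, h⟩
  obtain ⟨a, b, hab⟩ := hadj
  have hUne : U.Nonempty := by
    rcases hUcov a b hab with h | h
    · exact ⟨a, h⟩
    · exact ⟨b, h⟩
  -- the strategy [U, U]
  set S : List (Finset V) := [U, U] with hS
  have hlen : S.length = 2 := rfl
  have hshot0 : shots S 0 = U := rfl
  have hshot1 : shots S 1 = U := rfl
  have hvalid : ValidStrategy S := by
    intro s hs
    simp only [hS, List.mem_cons, List.mem_singleton, List.not_mem_nil, or_false] at hs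
    rcases hs with rfl | rfl <;> exact hUne
  have hwin : IsWinning G Set.univ S := by
    intro r hr
    by_cases h0 : r 0 ∈ U
    · exact ⟨0, by omega, by rwa [hshot0]⟩
    · refine ⟨1, by omega, ?_⟩
      rw [hshot1]
      have hadj01 := hr.2 0 (by omega)
      rcases hUcov _ _ hadj01 with h | h
      · exact absurd h h0
      · exact h
  have hZ1 : Zset G Set.univ S 1 ⊆ ↑U := by
    intro x hx
    obtain ⟨y, _, hyU, hyx⟩ := hx
    rw [hshot0] at hyU
    rcases hUcov y x hyx with h | h
    · exact absurd h hyU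
    · exact h
  have hmono : IsMonotoneStrat G Set.univ S := by
    intro w i j hi hij hj _ hw
    rw [hlen] at hi hj
    interval_cases j
    · omega
    · rw [hshot1]; exact hZ1 hw
  have huses : Uses S (vertexCoverNum G) := by
    intro s hs
    simp only [hS, List.mem_cons, List.mem_singleton, List.not_mem_nil, or_false] at hs
    rcases hs with rfl | rfl <;> · rw [hUcard]; exact le_rfl
  have hmemB : vertexCoverNum G ∈ {k | ∃ S : List (Finset V),
      ValidStrategy S ∧ IsWinning G Set.univ S ∧ IsMonotoneStrat G Set.univ S ∧ Uses S k} :=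
    ⟨S, hvalid, hwin, hmono, huses⟩
  constructor
  · have hBne : ({k | ∃ S : List (Finset V),
        ValidStrategy S ∧ IsWinning G Set.univ S ∧ IsMonotoneStrat G Set.univ S ∧ Uses S k} :
        Set ℕ).Nonempty := ⟨_, hmemB⟩
    obtain ⟨T, hT1, hT2, _, hT4⟩ := Nat.sInf_mem hBne
    exact Nat.sInf_le ⟨T, hT1, hT2, hT4⟩
  · exact Nat.sInf_le hmemB

end HuntersRabbit
end

section
/- Let G = (V, E) be a finite simple connected graph, U ⊆ V a vertex cover of G, k ≥ 1 an integer, and S ⊆ U a set such that the class C_S = { v ∈ V∖U : N(v) = S } has size q > k + 1; write C_S = {v_1, …, v_q}. Then h(G) ≤ k if and only if h(G[V ∖ {v_{k+2}, …, v_q}]) ≤ k, and mh(G) ≤ k if and only if mh(G[V ∖ {v_{k+2}, …, v_q}]) ≤ k. -/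
open SimpleGraph

namespace HuntersRabbit

universe u

variable {V : Type u}

/-! ### Auxiliary material -/

section FimageShots

set_option linter.unusedSectionVars false

/-- `Finset.image` with a classical `DecidableEq` instance. -/
noncomputable def fimage {α β : Type*} (f : α → β) (s : Finset α) : Finset β :=
  @Finset.image _ _ (Classical.decEq β) f s

lemma mem_fimage {α β : Type*} {f : α → β} {s : Finset α} {b : β} :
    b ∈ fimage f s ↔ ∃ a ∈ s, f a = b := by
  classical simp [fimage, Finset.mem_image]

lemma fimage_empty {α β : Type*} (f : α → β) : fimage f (∅ : Finset α) = ∅ := by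
  classical simp [fimage]

lemma card_fimage_le {α β : Type*} (f : α → β) (s : Finset α) :
    (fimage f s).card ≤ s.card := by
  classical exact Finset.card_image_le

lemma shots_map {α β : Type*} (g : Finset α → Finset β) (hg : g ∅ = ∅)
    (S : List (Finset α)) (i : ℕ) : shots (S.map g) i = g (shots S i) := by
  rcases lt_or_ge i S.length with h | h
  · rw [shots, shots, List.getD_eq_getElem _ _ (by simpa using h),
      List.getD_eq_getElem _ _ h, List.getElem_map]
  · rw [shots, shots, List.getD_eq_default _ _ (by simpa using h),
      List.getD_eq_default _ _ h, hg]

lemma card_shots_le {α : Type*} {k : ℕ} {S : List (Finset α)} (h : Uses S k) (i : ℕ) :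
    (shots S i).card ≤ k := by
  rcases lt_or_ge i S.length with hi | hi
  · rw [shots, List.getD_eq_getElem _ _ hi]
    exact h _ (List.getElem_mem hi)
  · rw [shots, List.getD_eq_default _ _ hi]
    simp

end FimageShots

section Kernel

set_option linter.unusedSectionVars false

variable {V : Type} [Fintype V] {G : SimpleGraph V} {U S R : Set V} {k : ℕ}

/-- The class of vertices outside the cover whose neighbourhood is exactly `S`. -/
def CS (G : SimpleGraph V) (U S : Set V) : Set V := {v | v ∉ U ∧ G.neighborSet v = S}

structure Setup (G : SimpleGraph V) (U S R : Set V) (k : ℕ) : Prop where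
  cover : ∀ u v : V, G.Adj u v → u ∈ U ∨ v ∈ U
  hk : 1 ≤ k
  hSU : S ⊆ U
  hbig : k + 1 < (CS G U S).ncard
  hR : R ⊆ CS G U S
  hRcard : (CS G U S \ R).ncard = k + 1

namespace Setup

variable (h : Setup G U S R k)
include h

lemma mem_S_of_adj {v x : V} (hv : v ∈ CS G U S) (hadj : G.Adj v x) : x ∈ S := by
  have := hv.2
  rw [← this]; exact hadj

lemma adj_of_mem_S {v x : V} (hv : v ∈ CS G U S) (hx : x ∈ S) : G.Adj v x := by
  have := hv.2
  rw [show x ∈ S ↔ x ∈ G.neighborSet v from by rw [this]] at hx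
  exact hx

lemma cs_not_mem_S {v : V} (hv : v ∈ CS G U S) : v ∉ S := fun hvS => hv.1 (h.hSU hvS)

lemma S_subset_Rc : S ⊆ Rᶜ := fun x hx hxR => (h.hR hxR).1 (h.hSU hx)

lemma not_adj_cs {v w : V} (hv : v ∈ CS G U S) (hw : w ∈ CS G U S) : ¬ G.Adj v w :=
  fun hadj => hw.1 (h.hSU (h.mem_S_of_adj hv hadj))

lemma R_nonempty : R.Nonempty := by
  rcases Set.eq_empty_or_nonempty R with he | hne
  · exfalso
    have h1 : (CS G U S \ R).ncard = (CS G U S).ncard := by rw [he, Set.diff_empty]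
    have h2 := h.hbig
    have h3 := h.hRcard
    omega
  · exact hne

/-- False twins get contaminated together (at any round). -/
lemma twin_mem_Z (T : List (Finset V)) {u w : V} (hu : u ∈ CS G U S) (hw : w ∈ CS G U S) :
    ∀ i, u ∈ Zset G Set.univ T i → w ∈ Zset G Set.univ T i := by
  intro i
  cases i with
  | zero => intro _; trivial
  | succ i =>
    rintro ⟨y, hyZ, hyS, hadj⟩
    have hyS' : y ∈ S := h.mem_S_of_adj hu hadj.symm
    exact ⟨y, hyZ, hyS, (h.adj_of_mem_S hw hyS').symm⟩

/-- There are `k+1` kept twins, so any finset of at most `k` vertices misses one. -/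
lemma exists_twin_avoid (F : Finset ↥(Rᶜ)) (hF : F.card ≤ k) :
    ∃ w : ↥(Rᶜ), ↑w ∈ CS G U S \ R ∧ w ∉ F := by
  by_contra hc
  push_neg at hc
  set K : Set ↥(Rᶜ) := {w : ↥(Rᶜ) | ↑w ∈ CS G U S \ R} with hKdef
  have himg : Subtype.val '' K = CS G U S \ R := by
    ext x
    constructor
    · rintro ⟨w, hw, rfl⟩; exact hw
    · intro hx
      exact ⟨⟨x, fun hxR => hx.2 hxR⟩, hx, rfl⟩
  have hKcard : K.ncard = k + 1 := by
    rw [← h.hRcard, ← himg, Set.ncard_image_of_injective _ Subtype.val_injective]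
  have hsub : K ⊆ ↑F := fun w hw => hc w hw
  have : K.ncard ≤ F.card := by
    have := Set.ncard_le_ncard hsub F.finite_toSet
    simpa using this
  omega

/-- Correspondence between the contaminated sets in `G` and in `G.induce Rᶜ`
for a pair of "matching" strategies. -/
lemma Zcorr (T : List (Finset V)) (S' : List (Finset ↥(Rᶜ)))
    (H1 : ∀ (i : ℕ) (y : ↥(Rᶜ)), ↑y ∈ shots T i → y ∈ shots S' i)
    (H2 : ∀ (i : ℕ) (y : ↥(Rᶜ)), y ∈ shots S' i → (↑y ∈ shots T i ∨ ↑y ∈ CS G U S))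
    (H3 : ∀ i : ℕ, (shots S' i).card ≤ k) :
    ∀ (i : ℕ) (x : ↥(Rᶜ)),
      x ∈ Zset (G.induce Rᶜ) Set.univ S' i ↔ ↑x ∈ Zset G Set.univ T i := by
  intro i
  induction i with
  | zero => intro x; simp [Zset]
  | succ i ih =>
    intro x
    constructor
    · rintro ⟨y, hy, hys, hadj⟩
      exact ⟨↑y, (ih y).1 hy, fun hmem => hys (H1 i y hmem), hadj⟩
    · rintro ⟨y, hy, hys, hadj⟩
      have key : ∀ c ∈ CS G U S, c ∈ Zset G Set.univ T i → (x : V) ∈ S →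
          x ∈ Zset (G.induce Rᶜ) Set.univ S' (i + 1) := by
        intro c hc hcZ hxS
        obtain ⟨w, hwK, hwF⟩ := h.exists_twin_avoid (shots S' i) (H3 i)
        have hwZ : ↑w ∈ Zset G Set.univ T i := h.twin_mem_Z T hc hwK.1 i hcZ
        exact ⟨w, (ih w).2 hwZ, hwF,
          show (G.induce Rᶜ).Adj w x from h.adj_of_mem_S hwK.1 hxS⟩
      by_cases hyR : y ∈ R
      · have hyC := h.hR hyR
        exact key y hyC hy (h.mem_S_of_adj hyC hadj)
      · by_cases hys' : (⟨y, hyR⟩ : ↥(Rᶜ)) ∈ shots S' i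
        · rcases H2 i ⟨y, hyR⟩ hys' with hT | hC
          · exact absurd hT hys
          · exact key y hC hy (h.mem_S_of_adj hC hadj)
        · exact ⟨⟨y, hyR⟩, (ih ⟨y, hyR⟩).2 hy, hys', hadj⟩

end Setup

/-! ### Strategy transformations -/

variable (R) in
/-- Map `V` to `↥Rᶜ`: identity on `Rᶜ`, sending `R` to a fixed kept twin `t0`. -/
noncomputable def fR (t0 : ↥(Rᶜ)) : V → ↥(Rᶜ) :=
  fun v => @dite _ (v ∈ Rᶜ) (Classical.dec _) (fun hv => ⟨v, hv⟩) (fun _ => t0)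

lemma fR_mem {t0 : ↥(Rᶜ)} {v : V} (hv : v ∈ Rᶜ) : fR R t0 v = ⟨v, hv⟩ := by
  unfold fR; exact dif_pos hv

lemma fR_coe {t0 : ↥(Rᶜ)} (v : ↥(Rᶜ)) : fR R t0 ↑v = v := by
  rw [fR_mem v.2]

lemma fR_not_mem {t0 : ↥(Rᶜ)} {v : V} (hv : v ∉ Rᶜ) : fR R t0 v = t0 := by
  unfold fR; exact dif_neg hv

variable (R) in
/-- Restriction of a strategy in `G` to a strategy in `G.induce Rᶜ`. -/
noncomputable def downStrat (t0 : ↥(Rᶜ)) (T : List (Finset V)) : List (Finset ↥(Rᶜ)) :=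
  T.map (fimage (fR R t0))

variable (R) in
/-- Lifting of a strategy in `G.induce Rᶜ` to a strategy in `G`. -/
noncomputable def upStrat (S' : List (Finset ↥(Rᶜ))) : List (Finset V) :=
  S'.map (fimage Subtype.val)

lemma shots_down {t0 : ↥(Rᶜ)} (T : List (Finset V)) (i : ℕ) :
    shots (downStrat R t0 T) i = fimage (fR R t0) (shots T i) :=
  shots_map _ (fimage_empty _) T i

lemma shots_up (S' : List (Finset ↥(Rᶜ))) (i : ℕ) :
    shots (upStrat R S') i = fimage Subtype.val (shots S' i) :=
  shots_map _ (fimage_empty _) S' i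

lemma length_down {t0 : ↥(Rᶜ)} (T : List (Finset V)) :
    (downStrat R t0 T).length = T.length := List.length_map _

lemma length_up (S' : List (Finset ↥(Rᶜ))) :
    (upStrat R S').length = S'.length := List.length_map _

lemma down_H1 {t0 : ↥(Rᶜ)} (T : List (Finset V)) (i : ℕ) (y : ↥(Rᶜ))
    (hy : ↑y ∈ shots T i) : y ∈ shots (downStrat R t0 T) i := by
  rw [shots_down, mem_fimage]
  exact ⟨↑y, hy, fR_coe y⟩

lemma up_H1 (S' : List (Finset ↥(Rᶜ))) (i : ℕ) (y : ↥(Rᶜ))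
    (hy : ↑y ∈ shots (upStrat R S') i) : y ∈ shots S' i := by
  rw [shots_up, mem_fimage] at hy
  obtain ⟨a, ha, haeq⟩ := hy
  rwa [Subtype.val_injective haeq] at ha

lemma up_mem {S' : List (Finset ↥(Rᶜ))} {i : ℕ} {y : ↥(Rᶜ)}
    (hy : y ∈ shots S' i) : ↑y ∈ shots (upStrat R S') i := by
  rw [shots_up, mem_fimage]
  exact ⟨y, hy, rfl⟩

namespace Setup

variable (h : Setup G U S R k)
include h

lemma down_H2 {t0 : ↥(Rᶜ)} (ht0 : ↑t0 ∈ CS G U S \ R) (T : List (Finset V)) (i : ℕ)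
    (y : ↥(Rᶜ)) (hy : y ∈ shots (downStrat R t0 T) i) :
    ↑y ∈ shots T i ∨ ↑y ∈ CS G U S := by
  rw [shots_down, mem_fimage] at hy
  obtain ⟨a, ha, haeq⟩ := hy
  by_cases haR : a ∈ Rᶜ
  · left
    rw [fR_mem haR] at haeq
    rw [← haeq]
    exact ha
  · right
    rw [fR_not_mem haR] at haeq
    rw [← haeq]
    exact ht0.1

lemma down_H3 {t0 : ↥(Rᶜ)} {T : List (Finset V)} (hUse : Uses T k) (i : ℕ) :
    (shots (downStrat R t0 T) i).card ≤ k := by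
  rw [shots_down]
  exact le_trans (card_fimage_le _ _) (card_shots_le hUse i)

lemma valid_down {t0 : ↥(Rᶜ)} {T : List (Finset V)} (hT : ValidStrategy T) :
    ValidStrategy (downStrat R t0 T) := by
  intro s hs
  rw [downStrat, List.mem_map] at hs
  obtain ⟨t, ht, rfl⟩ := hs
  obtain ⟨x, hx⟩ := hT t ht
  exact ⟨fR R t0 x, mem_fimage.mpr ⟨x, hx, rfl⟩⟩

lemma uses_down {t0 : ↥(Rᶜ)} {T : List (Finset V)} (hT : Uses T k) :
    Uses (downStrat R t0 T) k := by
  intro s hs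
  rw [downStrat, List.mem_map] at hs
  obtain ⟨t, ht, rfl⟩ := hs
  exact le_trans (card_fimage_le _ _) (hT t ht)

lemma valid_up {S' : List (Finset ↥(Rᶜ))} (hS' : ValidStrategy S') :
    ValidStrategy (upStrat R S') := by
  intro s hs
  rw [upStrat, List.mem_map] at hs
  obtain ⟨t, ht, rfl⟩ := hs
  obtain ⟨x, hx⟩ := hS' t ht
  exact ⟨↑x, mem_fimage.mpr ⟨x, hx, rfl⟩⟩

lemma uses_up {S' : List (Finset ↥(Rᶜ))} (hS' : Uses S' k) :
    Uses (upStrat R S') k := by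
  intro s hs
  rw [upStrat, List.mem_map] at hs
  obtain ⟨t, ht, rfl⟩ := hs
  exact le_trans (card_fimage_le _ _) (hS' t ht)

lemma winning_down {t0 : ↥(Rᶜ)} (T : List (Finset V)) (hw : IsWinning G Set.univ T) :
    IsWinning (G.induce Rᶜ) Set.univ (downStrat R t0 T) := by
  intro r' htraj
  have hlen : (downStrat R t0 T).length = T.length := length_down T
  have htrajG : Trajectory G Set.univ T.length (fun n => ↑(r' n)) :=
    ⟨trivial, fun i hi => htraj.2 i (by rw [hlen]; exact hi)⟩
  obtain ⟨j, hj, hmem⟩ := hw _ htrajG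
  refine ⟨j, by rw [hlen]; exact hj, ?_⟩
  rw [shots_down, mem_fimage]
  exact ⟨↑(r' j), hmem, fR_coe (r' j)⟩

lemma winning_up {S' : List (Finset ↥(Rᶜ))} (hUse' : Uses S' k)
    (hw' : IsWinning (G.induce Rᶜ) Set.univ S') :
    IsWinning G Set.univ (upStrat R S') := by
  intro r htraj
  have hlen : (upStrat R S').length = S'.length := length_up S'
  have hch : ∀ j : ℕ, ∃ w : ↥(Rᶜ), ↑w ∈ CS G U S \ R ∧ w ∉ shots S' j :=
    fun j => h.exists_twin_avoid _ (card_shots_le hUse' j)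
  classical
  set r' : ℕ → ↥(Rᶜ) := fun j => if hj : r j ∈ Rᶜ then ⟨r j, hj⟩ else (hch j).choose
    with hr'
  have hr'val : ∀ j, ∀ hj : r j ∈ Rᶜ, r' j = ⟨r j, hj⟩ := by
    intro j hj
    simp only [hr', dif_pos hj]
  have hr'not : ∀ j, r j ∉ Rᶜ → r' j = (hch j).choose := by
    intro j hj
    simp only [hr', dif_neg hj]
  have htraj' : Trajectory (G.induce Rᶜ) Set.univ S'.length r' := by
    refine ⟨trivial, ?_⟩
    intro i hi
    have hadj : G.Adj (r i) (r (i + 1)) := htraj.2 i (by rw [hlen]; exact hi)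
    show G.Adj ↑(r' i) ↑(r' (i + 1))
    by_cases ha : r i ∈ Rᶜ
    · by_cases hb : r (i + 1) ∈ Rᶜ
      · rw [hr'val i ha, hr'val _ hb]
        exact hadj
      · have hbC : r (i + 1) ∈ CS G U S := h.hR (Set.notMem_compl_iff.mp hb)
        have haS : r i ∈ S := h.mem_S_of_adj hbC hadj.symm
        rw [hr'val i ha, hr'not _ hb]
        exact (h.adj_of_mem_S (hch (i + 1)).choose_spec.1.1 haS).symm
    · have haC : r i ∈ CS G U S := h.hR (Set.notMem_compl_iff.mp ha)
      have hbS : r (i + 1) ∈ S := h.mem_S_of_adj haC hadj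
      have hb : r (i + 1) ∈ Rᶜ := h.S_subset_Rc hbS
      rw [hr'val _ hb, hr'not i ha]
      exact h.adj_of_mem_S (hch i).choose_spec.1.1 hbS
  obtain ⟨j, hj, hmem⟩ := hw' r' htraj'
  refine ⟨j, by rw [hlen]; exact hj, ?_⟩
  by_cases hjR : r j ∈ Rᶜ
  · rw [shots_up, mem_fimage]
    refine ⟨r' j, hmem, ?_⟩
    rw [hr'val j hjR]
  · exfalso
    rw [hr'not j hjR] at hmem
    exact (hch j).choose_spec.2 hmem


/-! ### Monotonicity transfer -/

lemma mono_down {t0 : ↥(Rᶜ)} (ht0 : ↑t0 ∈ CS G U S \ R) (T : List (Finset V))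
    (hUse : Uses T k) (hmono : IsMonotoneStrat G Set.univ T) :
    IsMonotoneStrat (G.induce Rᶜ) Set.univ (downStrat R t0 T) := by
  have hcorr := h.Zcorr T (downStrat R t0 T) (fun i y hy => down_H1 T i y hy)
    (fun i y hy => h.down_H2 ht0 T i y hy) (fun i => h.down_H3 hUse i)
  intro v i j hi hij hj hcl hZ
  have hlen : (downStrat R t0 T).length = T.length := length_down T
  rw [hlen] at hi hj
  have hvZ : (v : V) ∈ Zset G Set.univ T j := (hcorr j v).1 hZ
  rcases hcl with hvs | ⟨⟨y0, hy0⟩, hsub⟩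
  · rw [shots_down, mem_fimage] at hvs
    obtain ⟨a, haT, hfa⟩ := hvs
    by_cases haR : a ∈ Rᶜ
    · have hva : (v : V) = a := by rw [← hfa, fR_mem haR]
      have hclG : ClearedAt G Set.univ T (↑v) i := Or.inl (hva ▸ haT)
      exact down_H1 T j v (hmono (↑v) i j hi hij hj hclG hvZ)
    · have haRR : a ∈ R := Set.notMem_compl_iff.mp haR
      have hvt0 : v = t0 := by rw [← hfa, fR_not_mem haR]
      have haC : a ∈ CS G U S := h.hR haRR
      have hvC : (v : V) ∈ CS G U S := by rw [hvt0]; exact ht0.1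
      have haZ : a ∈ Zset G Set.univ T j := h.twin_mem_Z T hvC haC j hvZ
      have haTj : a ∈ shots T j := hmono a i j hi hij hj (Or.inl haT) haZ
      rw [shots_down, mem_fimage]
      exact ⟨a, haTj, by rw [fR_not_mem haR, hvt0]⟩
  · by_cases hcase : ∃ u ∈ R, G.Adj ↑v u ∧ u ∈ Zset G Set.univ T i
    · exfalso
      obtain ⟨u, huR, huadj, huZ⟩ := hcase
      have huC := h.hR huR
      have hvS : (v : V) ∈ S := h.mem_S_of_adj huC huadj.symm
      obtain ⟨w, hwK, hwF⟩ :=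
        h.exists_twin_avoid (shots (downStrat R t0 T) i) (h.down_H3 hUse i)
      apply hwF
      apply hsub
      refine ⟨?_, (hcorr i w).2 (h.twin_mem_Z T huC hwK.1 i huZ)⟩
      show (G.induce Rᶜ).Adj v w
      exact (h.adj_of_mem_S hwK.1 hvS).symm
    · have hclG : ClearedAt G Set.univ T (↑v) i := by
        right
        constructor
        · refine ⟨↑y0, ?_, (hcorr i y0).1 hy0.2⟩
          have : (G.induce Rᶜ).Adj v y0 := hy0.1
          exact this
        · intro y hy
          have hyadj : G.Adj (↑v) y := hy.1
          have hyZ : y ∈ Zset G Set.univ T i := hy.2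
          by_cases hyR : y ∈ R
          · exact absurd ⟨y, hyR, hyadj, hyZ⟩ hcase
          · have hy' : (⟨y, hyR⟩ : ↥(Rᶜ)) ∈ shots (downStrat R t0 T) i := by
              apply hsub
              refine ⟨?_, (hcorr i ⟨y, hyR⟩).2 hyZ⟩
              show (G.induce Rᶜ).Adj v ⟨y, hyR⟩
              exact hyadj
            rcases h.down_H2 ht0 T i ⟨y, hyR⟩ hy' with hT | hC
            · exact hT
            · exfalso
              obtain ⟨u, huR⟩ := h.R_nonempty
              have huC := h.hR huR
              have hyC : y ∈ CS G U S := hC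
              have hvS : (v : V) ∈ S := h.mem_S_of_adj hyC hyadj.symm
              exact hcase ⟨u, huR, (h.adj_of_mem_S huC hvS).symm,
                h.twin_mem_Z T hyC huC i hyZ⟩
      exact down_H1 T j v (hmono (↑v) i j hi hij hj hclG hvZ)

lemma mono_up {S' : List (Finset ↥(Rᶜ))} (hUse' : Uses S' k)
    (hmono' : IsMonotoneStrat (G.induce Rᶜ) Set.univ S') :
    IsMonotoneStrat G Set.univ (upStrat R S') := by
  have hcorr := h.Zcorr (upStrat R S') S' (fun i y hy => up_H1 S' i y hy)
    (fun i y hy => Or.inl (up_mem hy)) (fun i => card_shots_le hUse' i)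
  intro v i j hi hij hj hcl hZ
  have hlen : (upStrat R S').length = S'.length := length_up S'
  rw [hlen] at hi hj
  by_cases hvR : v ∈ Rᶜ
  · have hvZ' : (⟨v, hvR⟩ : ↥(Rᶜ)) ∈ Zset (G.induce Rᶜ) Set.univ S' j :=
      (hcorr j ⟨v, hvR⟩).2 hZ
    have hcl' : ClearedAt (G.induce Rᶜ) Set.univ S' ⟨v, hvR⟩ i := by
      rcases hcl with hvs | ⟨⟨y0, hy0⟩, hsub⟩
      · exact Or.inl (up_H1 S' i ⟨v, hvR⟩ hvs)
      · right
        constructor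
        · have hy0adj : G.Adj v y0 := hy0.1
          have hy0Z : y0 ∈ Zset G Set.univ (upStrat R S') i := hy0.2
          by_cases hy0R : y0 ∈ Rᶜ
          · refine ⟨⟨y0, hy0R⟩, ?_, (hcorr i ⟨y0, hy0R⟩).2 hy0Z⟩
            show (G.induce Rᶜ).Adj ⟨v, hvR⟩ ⟨y0, hy0R⟩
            exact hy0adj
          · have hy0C : y0 ∈ CS G U S := h.hR (Set.notMem_compl_iff.mp hy0R)
            have hvS : v ∈ S := h.mem_S_of_adj hy0C hy0adj.symm
            obtain ⟨w, hwK, _⟩ := h.exists_twin_avoid ∅ (by simp)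
            refine ⟨w, ?_, (hcorr i w).2 (h.twin_mem_Z (upStrat R S') hy0C hwK.1 i hy0Z)⟩
            show (G.induce Rᶜ).Adj ⟨v, hvR⟩ w
            exact (h.adj_of_mem_S hwK.1 hvS).symm
        · intro y' hy'
          have : (↑y' : V) ∈ G.neighborSet v ∩ Zset G Set.univ (upStrat R S') i := by
            constructor
            · have : (G.induce Rᶜ).Adj ⟨v, hvR⟩ y' := hy'.1
              exact this
            · exact (hcorr i y').1 hy'.2
          exact up_H1 S' i y' (hsub this)
    have := hmono' ⟨v, hvR⟩ i j hi hij hj hcl' hvZ'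
    exact up_mem this
  · -- v ∈ R : derive a contradiction
    have hvC : v ∈ CS G U S := h.hR (Set.notMem_compl_iff.mp hvR)
    exfalso
    rcases hcl with hvs | ⟨⟨y0, hy0⟩, hsub⟩
    · rw [shots_up, mem_fimage] at hvs
      obtain ⟨a, _, haeq⟩ := hvs
      exact hvR (haeq ▸ a.2)
    · obtain ⟨w, hwK, hwF⟩ := h.exists_twin_avoid (shots S' j) (card_shots_le hUse' j)
      apply hwF
      have hwC : (↑w : V) ∈ CS G U S := hwK.1
      have hy0S : y0 ∈ S := by
        have : y0 ∈ G.neighborSet v := hy0.1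
        rw [hvC.2] at this
        exact this
      have hy0Rc : y0 ∈ Rᶜ := h.S_subset_Rc hy0S
      have hclw : ClearedAt (G.induce Rᶜ) Set.univ S' w i := by
        right
        constructor
        · refine ⟨⟨y0, hy0Rc⟩, ?_, (hcorr i ⟨y0, hy0Rc⟩).2 hy0.2⟩
          show (G.induce Rᶜ).Adj w ⟨y0, hy0Rc⟩
          exact h.adj_of_mem_S hwC hy0S
        · intro y' hy'
          have hy'adj : G.Adj ↑w ↑y' := hy'.1
          have hy'S : (↑y' : V) ∈ S := h.mem_S_of_adj hwC hy'adj
          have hy'mem : (↑y' : V) ∈ G.neighborSet v ∩ Zset G Set.univ (upStrat R S') i := by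
            refine ⟨?_, (hcorr i y').1 hy'.2⟩
            exact h.adj_of_mem_S hvC hy'S
          exact up_H1 S' i y' (hsub hy'mem)
      have hwZ : w ∈ Zset (G.induce Rᶜ) Set.univ S' j :=
        (hcorr j w).2 (h.twin_mem_Z (upStrat R S') hvC hwC j hZ)
      exact hmono' w i j hi hij hj hclw hwZ


end Setup

end Kernel

/-! ### Computing the hunter numbers via `sInf` -/

lemma nat_sInf_le_iff {P : ℕ → Prop} (hP : ∀ m n, m ≤ n → P m → P n)
    (hex : ∃ n, P n) (k : ℕ) : sInf {n | P n} ≤ k ↔ P k :=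
  ⟨fun hle => hP _ _ hle (Nat.sInf_mem hex), fun hk => Nat.sInf_le hk⟩

lemma exists_univ_strategy {α : Type} [Fintype α] [Nonempty α] (G₀ : SimpleGraph α) :
    ∃ T : List (Finset α), ValidStrategy T ∧ IsWinning G₀ Set.univ T ∧
      IsMonotoneStrat G₀ Set.univ T ∧ Uses T (Fintype.card α) := by
  refine ⟨[Finset.univ], ?_, ?_, ?_, ?_⟩
  · intro s hs
    simp only [List.mem_singleton] at hs
    subst hs
    exact Finset.univ_nonempty
  · intro r _
    exact ⟨0, by simp, Finset.mem_univ _⟩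
  · intro v i j h1 h2 h3 _ _
    simp only [List.length_singleton] at h1 h3
    omega
  · intro s hs
    simp only [List.mem_singleton] at hs
    subst hs
    exact le_of_eq Finset.card_univ

/-- Kernelization safe rule: let `U` be a vertex cover of a finite simple
connected graph `G`, `k ≥ 1`, `S ⊆ U`, and suppose the class
`C_S = {v ∉ U | N(v) = S}` has more than `k + 1` elements. Removing from `G`
all but `k + 1` of the vertices of `C_S` (the set `R` being the removed
vertices) changes neither whether `h(G) ≤ k` nor whether `mh(G) ≤ k`. -/
theorem kernel_safe_rule {V : Type} [Fintype V]
    (G : SimpleGraph V) (hG : G.Connected)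
    (U : Set V) (hU : ∀ u v : V, G.Adj u v → u ∈ U ∨ v ∈ U)
    (k : ℕ) (hk : 1 ≤ k) (S : Set V) (hSU : S ⊆ U)
    (hbig : k + 1 < {v : V | v ∉ U ∧ G.neighborSet v = S}.ncard)
    (R : Set V) (hR : R ⊆ {v : V | v ∉ U ∧ G.neighborSet v = S})
    (hRcard : ({v : V | v ∉ U ∧ G.neighborSet v = S} \ R).ncard = k + 1) :
    (hunterNum G ≤ k ↔ hunterNum (G.induce Rᶜ) ≤ k) ∧
    (mhunterNum G ≤ k ↔ mhunterNum (G.induce Rᶜ) ≤ k) := by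
  classical
  have hs : Setup G U S R k := ⟨hU, hk, hSU, hbig, hR, hRcard⟩
  haveI : Nonempty V := hG.nonempty
  have hKne : (CS G U S \ R).Nonempty := by
    apply Set.nonempty_of_ncard_ne_zero
    rw [hs.hRcard]
    omega
  obtain ⟨t0v, ht0v⟩ := hKne
  have ht0R : t0v ∈ Rᶜ := fun hmem => ht0v.2 hmem
  have ht0 : ↑(⟨t0v, ht0R⟩ : ↥(Rᶜ)) ∈ CS G U S \ R := ht0v
  set t0 : ↥(Rᶜ) := ⟨t0v, ht0R⟩ with ht0def
  haveI : Nonempty ↥(Rᶜ) := ⟨t0⟩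
  haveI : Fintype ↥(Rᶜ) := Fintype.ofFinite _
  have hv1 : Nat.card V ≠ 1 := by
    have h1 : (CS G U S \ R).ncard ≤ Nat.card V := by
      rw [← Set.ncard_univ]
      exact Set.ncard_le_ncard (Set.subset_univ _) Set.finite_univ
    rw [hs.hRcard] at h1
    have := hs.hk
    omega
  have hv2 : Nat.card ↥(Rᶜ) ≠ 1 := by
    rw [Nat.card_coe_set_eq]
    have hsub : CS G U S \ R ⊆ Rᶜ := fun v hv hvR => hv.2 hvR
    have h1 : (CS G U S \ R).ncard ≤ (Rᶜ : Set V).ncard :=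
      Set.ncard_le_ncard hsub (Set.toFinite _)
    rw [hs.hRcard] at h1
    have := hs.hk
    omega
  have hmono1 : ∀ m n : ℕ, m ≤ n →
      (∃ T : List (Finset V), ValidStrategy T ∧ IsWinning G Set.univ T ∧ Uses T m) →
      (∃ T : List (Finset V), ValidStrategy T ∧ IsWinning G Set.univ T ∧ Uses T n) := by
    rintro m n hmn ⟨T, a, b, c⟩
    exact ⟨T, a, b, fun s hs' => le_trans (c s hs') hmn⟩
  have hmono2 : ∀ m n : ℕ, m ≤ n →
      (∃ T : List (Finset ↥(Rᶜ)), ValidStrategy T ∧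
        IsWinning (G.induce Rᶜ) Set.univ T ∧ Uses T m) →
      (∃ T : List (Finset ↥(Rᶜ)), ValidStrategy T ∧
        IsWinning (G.induce Rᶜ) Set.univ T ∧ Uses T n) := by
    rintro m n hmn ⟨T, a, b, c⟩
    exact ⟨T, a, b, fun s hs' => le_trans (c s hs') hmn⟩
  have hmono3 : ∀ m n : ℕ, m ≤ n →
      (∃ T : List (Finset V), ValidStrategy T ∧ IsWinning G Set.univ T ∧
        IsMonotoneStrat G Set.univ T ∧ Uses T m) →
      (∃ T : List (Finset V), ValidStrategy T ∧ IsWinning G Set.univ T ∧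
        IsMonotoneStrat G Set.univ T ∧ Uses T n) := by
    rintro m n hmn ⟨T, a, b, m', c⟩
    exact ⟨T, a, b, m', fun s hs' => le_trans (c s hs') hmn⟩
  have hmono4 : ∀ m n : ℕ, m ≤ n →
      (∃ T : List (Finset ↥(Rᶜ)), ValidStrategy T ∧
        IsWinning (G.induce Rᶜ) Set.univ T ∧
        IsMonotoneStrat (G.induce Rᶜ) Set.univ T ∧ Uses T m) →
      (∃ T : List (Finset ↥(Rᶜ)), ValidStrategy T ∧
        IsWinning (G.induce Rᶜ) Set.univ T ∧
        IsMonotoneStrat (G.induce Rᶜ) Set.univ T ∧ Uses T n) := by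
    rintro m n hmn ⟨T, a, b, m', c⟩
    exact ⟨T, a, b, m', fun s hs' => le_trans (c s hs') hmn⟩
  obtain ⟨T₁, hT₁a, hT₁b, hT₁m, hT₁c⟩ := exists_univ_strategy G
  obtain ⟨T₂, hT₂a, hT₂b, hT₂m, hT₂c⟩ := exists_univ_strategy (G.induce Rᶜ)
  have hiff1 : hunterNum G ≤ k ↔
      ∃ T : List (Finset V), ValidStrategy T ∧ IsWinning G Set.univ T ∧ Uses T k := by
    rw [hunterNum, hunterNumW, if_neg hv1]
    exact nat_sInf_le_iff hmono1 ⟨Fintype.card V, T₁, hT₁a, hT₁b, hT₁c⟩ k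
  have hiff2 : hunterNum (G.induce Rᶜ) ≤ k ↔
      ∃ T : List (Finset ↥(Rᶜ)), ValidStrategy T ∧
        IsWinning (G.induce Rᶜ) Set.univ T ∧ Uses T k := by
    rw [hunterNum, hunterNumW, if_neg hv2]
    exact nat_sInf_le_iff hmono2 ⟨Fintype.card ↥(Rᶜ), T₂, hT₂a, hT₂b, hT₂c⟩ k
  have hiff3 : mhunterNum G ≤ k ↔
      ∃ T : List (Finset V), ValidStrategy T ∧ IsWinning G Set.univ T ∧
        IsMonotoneStrat G Set.univ T ∧ Uses T k := by
    rw [mhunterNum, mhunterNumW, if_neg hv1]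
    exact nat_sInf_le_iff hmono3 ⟨Fintype.card V, T₁, hT₁a, hT₁b, hT₁m, hT₁c⟩ k
  have hiff4 : mhunterNum (G.induce Rᶜ) ≤ k ↔
      ∃ T : List (Finset ↥(Rᶜ)), ValidStrategy T ∧
        IsWinning (G.induce Rᶜ) Set.univ T ∧
        IsMonotoneStrat (G.induce Rᶜ) Set.univ T ∧ Uses T k := by
    rw [mhunterNum, mhunterNumW, if_neg hv2]
    exact nat_sInf_le_iff hmono4 ⟨Fintype.card ↥(Rᶜ), T₂, hT₂a, hT₂b, hT₂m, hT₂c⟩ k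
  constructor
  · rw [hiff1, hiff2]
    constructor
    · rintro ⟨T, ha, hb, hc⟩
      exact ⟨downStrat R t0 T, hs.valid_down ha, hs.winning_down T hb, hs.uses_down hc⟩
    · rintro ⟨S', ha, hb, hc⟩
      exact ⟨upStrat R S', hs.valid_up ha, hs.winning_up hc hb, hs.uses_up hc⟩
  · rw [hiff3, hiff4]
    constructor
    · rintro ⟨T, ha, hb, hm, hc⟩
      exact ⟨downStrat R t0 T, hs.valid_down ha, hs.winning_down T hb,
        hs.mono_down ht0 T hc hm, hs.uses_down hc⟩
    · rintro ⟨S', ha, hb, hm, hc⟩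
      exact ⟨upStrat R S', hs.valid_up ha, hs.winning_up hc hb,
        hs.mono_up hc hm, hs.uses_up hc⟩

end HuntersRabbit
end

section
/- Let G = (V, E) be a finite simple graph with at least two vertices and let (S_1,…,S_ℓ) be a monotone hunter strategy in G (with respect to W = V), with contaminated sets Z_0 = V and Z_i = { x ∈ V : ∃ y ∈ Z_{i−1}∖S_i with xy ∈ E }. Then for all indices 0 ≤ p ≤ i ≤ ℓ, Z_i ⊆ Z_p. -/
open SimpleGraph

namespace HuntersRabbit

universe u

variable {V : Type u}

/-- For a monotone hunter strategy (w.r.t. `W = V`) in a graph with at least two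
vertices, the contaminated sets are non-increasing: `Z_i ⊆ Z_p` for
`0 ≤ p ≤ i ≤ ℓ`. -/
theorem Zset_antitone_of_monotone {V : Type} [Fintype V]
    (G : SimpleGraph V) (h2 : 2 ≤ Fintype.card V)
    (S : List (Finset V)) (hS : ValidStrategy S)
    (hmono : IsMonotoneStrat G Set.univ S)
    (p i : ℕ) (hpi : p ≤ i) (hi : i ≤ S.length) :
    Zset G Set.univ S i ⊆ Zset G Set.univ S p := by
  have key : ∀ k, k + 1 ≤ S.length →
      Zset G Set.univ S (k + 1) ⊆ Zset G Set.univ S k := by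
    intro k
    induction k with
    | zero => intro _ x _; exact Set.mem_univ x
    | succ k ih =>
      intro hk x hx
      have ih' := ih (by omega)
      by_contra hxn
      obtain ⟨y, hy, hyS, hyx⟩ := hx
      have hyK : y ∈ Zset G Set.univ S k := ih' hy
      have hyshot : y ∈ shots S k := by
        by_contra hys
        exact hxn ⟨y, hyK, hys, hyx⟩
      exact hyS (hmono y k (k + 1) (by omega) (by omega) (by omega)
        (Or.inl hyshot) hy)
  clear hS h2
  induction i with
  | zero =>
    have : p = 0 := by omega
    subst this; exact subset_rfl
  | succ i ih =>
    rcases Nat.eq_or_lt_of_le hpi with h | h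
    · exact h ▸ subset_rfl
    · exact (key i hi).trans (ih (by omega) (by omega))

end HuntersRabbit
end
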